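/- arXiv:1611.07102 — 6 statements merged into one kernel-verified Lean document; each statement's English description precedes it below -/
import Mathlib

section
/- Let F be a consular election rule satisfying SPO and SPP. Suppose F(P) = W, let t = best(P_i, W) and s = worst(P_i, W), and suppose s is not top-ranked in P_i. Let W' = F(P^{i↑s}). Then best(P_i^{↑s}, W') ∈ {t, s} and worst(P_i^{↑s}, W') ∈ {s, t}. -/
open Function

/-- A ballot is a strict linear order on the set of alternatives. -/
abbrev Ballot (A : Type*) := LinearOrder A

/-- A profile assigns a ballot to each voter. -/
abbrev Profile (V A : Type*) := V → Ballot A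

variable {V A : Type*}

/-- The best (greatest) element of `W` under ballot `L` (junk value if `W` is empty). -/
noncomputable def bestIn [Nonempty A] (L : Ballot A) (W : Finset A) : A :=
  if h : W.Nonempty then @Finset.max' A L W h else Classical.arbitrary A

/-- The worst (least) element of `W` under ballot `L` (junk value if `W` is empty). -/
noncomputable def worstIn [Nonempty A] (L : Ballot A) (W : Finset A) : A :=
  if h : W.Nonempty then @Finset.min' A L W h else Classical.arbitrary A

/-- Strategy-proofness for optimists. -/
def SPO [DecidableEq V] [Nonempty A] (F : Profile V A → Finset A) : Prop :=
  ∀ (P : Profile V A) (i : V) (Pi' : Ballot A),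
    (P i).le (bestIn (P i) (F (Function.update P i Pi'))) (bestIn (P i) (F P))

/-- Strategy-proofness for pessimists. -/
def SPP [DecidableEq V] [Nonempty A] (F : Profile V A → Finset A) : Prop :=
  ∀ (P : Profile V A) (i : V) (Pi' : Ballot A),
    (P i).le (worstIn (P i) (F (Function.update P i Pi'))) (worstIn (P i) (F P))

/-- `F` is weakly viable if every alternative is on some winning committee. -/
def WeaklyViable (F : Profile V A → Finset A) : Prop :=
  ∀ a : A, ∃ P : Profile V A, a ∈ F P

/-- `F` is Marian if some alternative is on every winning committee. -/
def Marian (F : Profile V A → Finset A) : Prop :=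
  ∃ m : A, ∀ P : Profile V A, m ∈ F P

/-- restriction of a ballot to a subset of alternatives -/
def restrictBallot (L : Ballot A) (B : Finset A) : Ballot {x // x ∈ B} :=
  @LinearOrder.lift' _ A L (fun x => (x : A)) Subtype.val_injective

/-- A consular rule is reducible if it is the disjoint union of two social choice functions. -/
def Reducible [Fintype A] [DecidableEq A] (F : Profile V A → Finset A) : Prop :=
  ∃ B C : Finset A, B.Nonempty ∧ C.Nonempty ∧ Disjoint B C ∧ B ∪ C = Finset.univ ∧
    ∃ (G : Profile V {x // x ∈ B} → {x // x ∈ B}) (H : Profile V {x // x ∈ C} → {x // x ∈ C}),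
      ∀ P : Profile V A,
        F P = {((G (fun i => restrictBallot (P i) B)) : A), ((H (fun i => restrictBallot (P i) C)) : A)}

/-- The range graph of a consular election rule. -/
def rangeGraph [DecidableEq A] (F : Profile V A → Finset A) : SimpleGraph A where
  Adj a b := a ≠ b ∧ ∃ P : Profile V A, F P = {a, b}
  symm := ⟨by
    rintro a b ⟨hab, P, hP⟩
    exact ⟨hab.symm, P, by rwa [Finset.pair_comm]⟩⟩
  loopless := ⟨by rintro a ⟨h, -⟩; exact h rfl⟩

/-- `t` is ranked immediately above `s` in ballot `L`. -/
def JustAbove (L : Ballot A) (s t : A) : Prop :=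
  L.lt s t ∧ ∀ z, ¬ (L.lt s z ∧ L.lt z t)

/-- The ballot obtained from `L` by transposing the alternatives `s` and `t`. -/
def swapBallot [DecidableEq A] (L : Ballot A) (s t : A) : Ballot A :=
  @LinearOrder.lift' A A L (Equiv.swap s t) (Equiv.injective _)

/-- `L'` is obtained from `L` by moving `s` up. -/
def MovedUp (L L' : Ballot A) (s : A) : Prop :=
  (∀ x y, x ≠ s → y ≠ s → (L'.lt x y ↔ L.lt x y)) ∧ ∀ x, L.lt x s → L'.lt x s

/-- `L'` is obtained from `L` by moving `s` down. -/
def MovedDown (L L' : Ballot A) (s : A) : Prop :=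
  (∀ x y, x ≠ s → y ≠ s → (L'.lt x y ↔ L.lt x y)) ∧ ∀ x, L.lt s x → L'.lt s x

/-- Strategy-proofness of a single-winner social choice function. -/
def SCFStrategyProof {B : Type*} [DecidableEq V] (G : Profile V B → B) : Prop :=
  ∀ (Q : Profile V B) (i : V) (Qi' : Ballot B),
    (Q i).le (G (Function.update Q i Qi')) (G Q)

/-- Edge-connectivity of a graph. -/
def EdgeConnectivity {X : Type*} (G : SimpleGraph X) : Prop :=
  ∀ a b c d : X, G.Adj a b → G.Adj c d → a ≠ c → a ≠ d → b ≠ c → b ≠ d →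
    (G.Adj a c ∨ G.Adj a d) ∧ (G.Adj b c ∨ G.Adj b d)


section Helpers2
variable {α : Type*} [Nonempty α] [DecidableEq α]

lemma bestIn_pair_of_le [M : LinearOrder α] {a b : α} (h : a ≤ b) :
    bestIn M {a, b} = b ∧ worstIn M {a, b} = a := by
  have hne : ({a, b} : Finset α).Nonempty := ⟨a, by simp⟩
  rw [bestIn, worstIn, dif_pos hne, dif_pos hne]
  constructor
  · apply le_antisymm
    · apply Finset.max'_le
      intro y hy
      rcases Finset.mem_insert.mp hy with rfl | hy
      · exact h
      · simp only [Finset.mem_singleton] at hy; subst hy; exact le_rfl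
    · exact Finset.le_max' _ _ (by simp)
  · apply le_antisymm
    · exact Finset.min'_le _ _ (by simp)
    · apply Finset.le_min'
      intro y hy
      rcases Finset.mem_insert.mp hy with rfl | hy
      · exact le_rfl
      · simp only [Finset.mem_singleton] at hy; subst hy; exact h

lemma bestIn_pair_of_le' [M : LinearOrder α] {a b : α} (h : b ≤ a) :
    bestIn M {a, b} = a ∧ worstIn M {a, b} = b := by
  rw [Finset.pair_comm]; exact bestIn_pair_of_le h

lemma pairFacts [M : LinearOrder α] {W : Finset α} (h2 : W.card = 2) :
    bestIn M W ∈ W ∧ worstIn M W ∈ W ∧ worstIn M W < bestIn M W ∧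
      ∀ x ∈ W, x ≤ bestIn M W ∧ worstIn M W ≤ x ∧ (x = bestIn M W ∨ x = worstIn M W) := by
  have hne : W.Nonempty := Finset.card_pos.mp (by omega)
  have hlt := Finset.min'_lt_max'_of_card W (by omega : 1 < W.card)
  rw [bestIn, worstIn, dif_pos hne, dif_pos hne]
  refine ⟨W.max'_mem hne, W.min'_mem hne, hlt, fun x hx => ⟨W.le_max' x hx, W.min'_le x hx, ?_⟩⟩
  by_contra h
  push_neg at h
  have hsub : ({x, W.max' hne, W.min' hne} : Finset α) ⊆ W := by
    intro y hy; simp only [Finset.mem_insert, Finset.mem_singleton] at hy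
    rcases hy with rfl|rfl|rfl
    exacts [hx, W.max'_mem hne, W.min'_mem hne]
  have hcard : ({x, W.max' hne, W.min' hne} : Finset α).card = 3 := by
    rw [Finset.card_insert_of_notMem (by simp [h.1, h.2]),
      Finset.card_insert_of_notMem (by simp [hlt.ne']), Finset.card_singleton]
  have := Finset.card_le_card hsub
  omega

lemma pair_eq [M : LinearOrder α] {W : Finset α} (h2 : W.card = 2) :
    W = {bestIn M W, worstIn M W} := by
  obtain ⟨h1, h2', _, h4⟩ := pairFacts (M := M) h2
  apply Finset.Subset.antisymm
  · intro x hx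
    rcases (h4 x hx).2.2 with rfl|rfl <;> simp
  · intro x hx
    rcases Finset.mem_insert.mp hx with rfl|hx
    · exact h1
    · simp only [Finset.mem_singleton] at hx; subst hx; exact h2'

lemma final_comb [M : LinearOrder α] (s t u t'' s'' : α)
    (hst : s < t) (hsu : s < u) (hbetw : ∀ z, ¬(s < z ∧ z < u))
    (ha1 : t'' ≤ t) (hb : t'' ≤ s ∨ s'' ≤ s)
    (hc1 : t ≤ Equiv.swap s u t'')
    (hc2a : s ≤ Equiv.swap s u s'')
    (hc2b : u ≠ t → u ≤ Equiv.swap s u s'')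
    (hd : Equiv.swap s u s'' ≤ Equiv.swap s u t'') :
    (t'' = t ∨ t'' = s) ∧ (s'' = s ∨ s'' = t) := by
  have hT : t'' = t ∨ t'' = s := by
    by_cases h1 : t'' = s
    · right; exact h1
    by_cases h2 : t'' = u
    · by_cases hut : u = t
      · left; rw [h2, hut]
      · rw [h2, Equiv.swap_apply_right] at hc1
        exact absurd hc1 (not_le.mpr hst)
    · rw [Equiv.swap_apply_of_ne_of_ne h1 h2] at hc1
      left; exact le_antisymm ha1 hc1
  refine ⟨hT, ?_⟩
  by_cases hs1 : s'' = s
  · left; exact hs1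
  by_cases hs2 : s'' = u
  · by_cases hut : u = t
    · right; rw [hs2, hut]
    · have := hc2b hut
      rw [hs2, Equiv.swap_apply_right] at this
      exact absurd this (not_le.mpr hsu)
  · rw [Equiv.swap_apply_of_ne_of_ne hs1 hs2] at hc2a hd
    have hss : s < s'' := lt_of_le_of_ne hc2a (Ne.symm hs1)
    have hus : u ≤ s'' := le_of_not_gt fun h => hbetw s'' ⟨hss, h⟩
    rcases hb with hb | hb
    · rcases hT with rfl | rfl
      · exact absurd hb (not_le.mpr hst)
      · rw [Equiv.swap_apply_left] at hd
        exact absurd (le_antisymm hd hus) hs2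
    · exact absurd hb (not_le.mpr hss)

lemma swap_le_iff [M : LinearOrder α] (s u a b : α) :
    (swapBallot M s u).le a b ↔ Equiv.swap s u a ≤ Equiv.swap s u b := Iff.rfl

lemma swap_lt_iff [M : LinearOrder α] (s u a b : α) :
    (swapBallot M s u).lt a b ↔ Equiv.swap s u a < Equiv.swap s u b :=
  lt_iff_lt_of_le_iff_le' (swap_le_iff s u b a) (swap_le_iff s u a b)

lemma core [M : LinearOrder α] (s t u : α) (W' : Finset α)
    (hc' : W'.card = 2)
    (hst : s < t) (hsu : s < u) (hbetw : ∀ z, ¬(s < z ∧ z < u))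
    (h1 : bestIn M W' ≤ t)
    (h2 : worstIn M W' ≤ s)
    (h3 : (swapBallot M s u).le (bestIn (swapBallot M s u) {t, s})
            (bestIn (swapBallot M s u) W'))
    (h4 : (swapBallot M s u).le (worstIn (swapBallot M s u) {t, s})
            (worstIn (swapBallot M s u) W')) :
    (bestIn (swapBallot M s u) W' = t ∨ bestIn (swapBallot M s u) W' = s) ∧
      (worstIn (swapBallot M s u) W' = s ∨ worstIn (swapBallot M s u) W' = t) := by
  obtain ⟨ht''W, hs''W, hlt'', helt'⟩ := pairFacts (M := swapBallot M s u) hc'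
  obtain ⟨_, hwmem, _, helt⟩ := pairFacts (M := M) hc'
  have hut : u ≤ t := le_of_not_gt fun h => hbetw t ⟨hst, h⟩
  have ha1 : bestIn (swapBallot M s u) W' ≤ t :=
    le_trans (helt _ ht''W).1 h1
  have hb : bestIn (swapBallot M s u) W' ≤ s ∨ worstIn (swapBallot M s u) W' ≤ s := by
    rcases (helt' (worstIn M W') hwmem).2.2 with h | h
    · left; rw [← h]; exact h2
    · right; rw [← h]; exact h2
  have hd : Equiv.swap s u (worstIn (swapBallot M s u) W') ≤
      Equiv.swap s u (bestIn (swapBallot M s u) W') :=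
    ((swap_lt_iff s u _ _).mp hlt'').le
  by_cases hne_ut : u = t
  · -- u = t : in the swapped ballot, t is below s
    have hts : (swapBallot M s u).le t s := by
      rw [swap_le_iff, hne_ut, Equiv.swap_apply_right, Equiv.swap_apply_left]
      exact hst.le
    obtain ⟨hbp, hwp⟩ := bestIn_pair_of_le (M := swapBallot M s u) hts
    rw [hbp] at h3
    rw [hwp] at h4
    rw [swap_le_iff, Equiv.swap_apply_left] at h3
    have h3' : t ≤ Equiv.swap s u (bestIn (swapBallot M s u) W') :=
      le_trans (le_of_eq hne_ut.symm) h3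
    rw [swap_le_iff] at h4
    have hswt : Equiv.swap s u t = s := by
      rw [← hne_ut]; exact Equiv.swap_apply_right s u
    rw [hswt] at h4
    exact final_comb s t u _ _ hst hsu hbetw ha1 hb h3' h4
      (fun h => absurd hne_ut h) hd
  · -- u ≠ t : in the swapped ballot, s is still below t
    have hts : (swapBallot M s u).le s t := by
      rw [swap_le_iff, Equiv.swap_apply_left,
        Equiv.swap_apply_of_ne_of_ne (Ne.symm hst.ne) (Ne.symm hne_ut)]
      exact hut
    obtain ⟨hbp, hwp⟩ := bestIn_pair_of_le' (M := swapBallot M s u) hts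
    rw [hbp] at h3
    rw [hwp] at h4
    rw [swap_le_iff, Equiv.swap_apply_of_ne_of_ne (Ne.symm hst.ne) (Ne.symm hne_ut)] at h3
    rw [swap_le_iff, Equiv.swap_apply_left] at h4
    exact final_comb s t u _ _ hst hsu hbetw ha1 hb h3
      (le_trans hsu.le h4) (fun _ => h4) hd

end Helpers2

/-- for a consular rule, swapping the worst committee member `s` one position
up in voter `i`'s ballot: the new best is `t` or `s`, and the new worst is `s` or `t`. -/
theorem statement_2 {V A : Type*} [Fintype V] [Nonempty V] [DecidableEq V] [Fintype A] [DecidableEq A] [Nonempty A]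
    (F : Profile V A → Finset A) (hcomm : ∀ P, (F P).card = 2)
    (hSPO : SPO F) (hSPP : SPP F)
    (P : Profile V A) (i : V) (W : Finset A) (hW : F P = W)
    (t s u : A)
    (ht : bestIn (P i) W = t) (hs : worstIn (P i) W = s)
    (hu : JustAbove (P i) s u)
    (W' : Finset A)
    (hW' : F (Function.update P i (swapBallot (P i) s u)) = W') :
    (bestIn (swapBallot (P i) s u) W' = t ∨ bestIn (swapBallot (P i) s u) W' = s) ∧
    (worstIn (swapBallot (P i) s u) W' = s ∨ worstIn (swapBallot (P i) s u) W' = t) := by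
  have hcW : W.card = 2 := by rw [← hW]; exact hcomm P
  have hcW' : W'.card = 2 := by rw [← hW']; exact hcomm _
  have hWpair : W = {t, s} := by
    have h := pair_eq (M := P i) hcW
    rw [ht, hs] at h; exact h
  have hst : (P i).lt s t := by
    have h := (pairFacts (M := P i) hcW).2.2.1
    rw [ht, hs] at h; exact h
  have h1 := hSPO P i (swapBallot (P i) s u)
  rw [hW', hW, ht] at h1
  have h2 := hSPP P i (swapBallot (P i) s u)
  rw [hW', hW, hs] at h2
  have hkey : Function.update (Function.update P i (swapBallot (P i) s u)) i (P i) = P := by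
    rw [Function.update_idem, Function.update_eq_self]
  have h3 := hSPO (Function.update P i (swapBallot (P i) s u)) i (P i)
  rw [hkey, hW, hW'] at h3
  rw [Function.update_self] at h3
  have h4 := hSPP (Function.update P i (swapBallot (P i) s u)) i (P i)
  rw [hkey, hW, hW'] at h4
  rw [Function.update_self] at h4
  rw [hWpair] at h3 h4
  exact core (M := P i) s t u W' hcW' (by exact hst) (by exact hu.1) (by exact hu.2)
    (by exact h1) (by exact h2) (by exact h3) (by exact h4)
end

section
/- Upwards monotonicity: Let F be a consular election rule satisfying SPP and SPO, let F(P) = {a, b}, and let P_i' be a ballot obtained from voter i's ballot P_i by moving an alternative s up (i.e., all pairs of alternatives other than s are ordered the same in P_i' as in P_i, and every alternative ranked below s in P_i is still ranked below s in P_i'). If s ∈ {a, b}, then F(P_i'P_{-i}) = F(P). If s ∉ {a, b}, then either F(P_i'P_{-i}) = F(P), or F(P_i'P_{-i}) = {s, x} for some x ∈ {a, b}; moreover the latter case can occur only if s overtakes the replaced element y ∈ {a,b}\{x} (i.e., y ≻_i s but s ≻_i' y). -/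
open Function

variable {V A : Type*}

namespace ConsularAux

variable {V A : Type*}

lemma blt_irrefl (L : Ballot A) (x : A) : ¬ L.lt x x := by
  letI := L; exact lt_irrefl x

lemma blt_asymm (L : Ballot A) {x y : A} (h : L.lt x y) : ¬ L.lt y x := by
  letI := L; exact lt_asymm h

lemma blt_trans (L : Ballot A) {x y z : A} (h1 : L.lt x y) (h2 : L.lt y z) : L.lt x z := by
  letI := L; exact lt_trans h1 h2

lemma blt_tri (L : Ballot A) (x y : A) : L.lt x y ∨ x = y ∨ L.lt y x := by
  letI := L; exact lt_trichotomy x y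

lemma blt_ne (L : Ballot A) {x y : A} (h : L.lt x y) : x ≠ y := by
  intro h'; rw [h'] at h; exact blt_irrefl L y h

lemma bnot_lt_of_le (L : Ballot A) {x y : A} (h : L.le x y) : ¬ L.lt y x := by
  letI := L; exact not_lt.mpr h

noncomputable def below [Fintype A] (L : Ballot A) (x : A) : Finset A :=
  @Finset.filter A (fun y => L.lt y x) (Classical.decPred _) Finset.univ

lemma mem_below [Fintype A] (L : Ballot A) (x z : A) : z ∈ below L x ↔ L.lt z x := by
  unfold below
  have h := @Finset.mem_filter A (fun y => L.lt y x) (Classical.decPred _) Finset.univ z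
  rw [h]
  exact ⟨fun h => h.2, fun h => ⟨Finset.mem_univ _, h⟩⟩

noncomputable def rk [Fintype A] (L : Ballot A) (x : A) : ℕ := (below L x).card

lemma rk_lt_iff [Fintype A] (L : Ballot A) (x y : A) : rk L x < rk L y ↔ L.lt x y := by
  letI := L
  constructor
  · intro h
    by_contra hxy
    have hle : y ≤ x := le_of_not_gt hxy
    have hsub : below L y ⊆ below L x := by
      intro z hz
      rw [mem_below] at hz ⊢
      exact lt_of_lt_of_le hz hle
    have h2 := Finset.card_le_card hsub
    unfold rk at h
    omega
  · intro h
    apply Finset.card_lt_card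
    have hsub : below L x ⊆ below L y := by
      intro z hz
      rw [mem_below] at hz ⊢
      exact lt_trans hz h
    rw [Finset.ssubset_iff_of_subset hsub]
    refine ⟨x, ?_, ?_⟩
    · rw [mem_below]; exact h
    · rw [mem_below]; exact lt_irrefl x

lemma rk_eq_iff [Fintype A] (L : Ballot A) (x y : A) : rk L x = rk L y ↔ x = y := by
  constructor
  · intro h
    letI := L
    rcases lt_trichotomy x y with h' | h' | h'
    · have := (rk_lt_iff L x y).mpr h'; omega
    · exact h'
    · have := (rk_lt_iff L y x).mpr h'; omega
  · rintro rfl; rfl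

lemma rk_le_of_le [Fintype A] (L : Ballot A) {x y : A} (h : L.le x y) : rk L x ≤ rk L y := by
  by_contra h'
  have h2 : rk L y < rk L x := by omega
  have h3 := (rk_lt_iff L y x).mp h2
  letI := L
  exact absurd h (not_le_of_gt h3)

lemma rk_succ [Fintype A] (L : Ballot A) {s t : A} (hst : L.lt s t)
    (hadj : ∀ z, ¬(L.lt s z ∧ L.lt z t)) : rk L t = rk L s + 1 := by
  have hins : below L t = insert s (below L s) := by
    ext z
    rw [mem_below, Finset.mem_insert, mem_below]
    letI := L
    constructor
    · intro h
      rcases lt_trichotomy z s with h' | h' | h'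
      · exact Or.inr h'
      · exact Or.inl h'
      · exact absurd ⟨h', h⟩ (hadj z)
    · rintro (rfl | h)
      · exact hst
      · exact lt_trans h hst
  have hnm : s ∉ below L s := by rw [mem_below]; letI := L; exact lt_irrefl s
  unfold rk
  rw [hins, Finset.card_insert_of_notMem hnm]

lemma rk_same [Fintype A] (L L' : Ballot A) (hsame : ∀ x y, L'.lt x y ↔ L.lt x y) (x : A) :
    rk L' x = rk L x := by
  have h : below L' x = below L x := by
    ext z; rw [mem_below, mem_below]; exact hsame z x
  unfold rk
  rw [h]

lemma bestIn_mem [Nonempty A] (L : Ballot A) {W : Finset A} (h : W.Nonempty) :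
    bestIn L W ∈ W := by
  unfold bestIn; rw [dif_pos h]; exact @Finset.max'_mem A L W h

lemma le_bestIn [Nonempty A] (L : Ballot A) {W : Finset A} (h : W.Nonempty) {x : A} (hx : x ∈ W) :
    L.le x (bestIn L W) := by
  unfold bestIn; rw [dif_pos h]; exact @Finset.le_max' A L W x hx

lemma worstIn_mem [Nonempty A] (L : Ballot A) {W : Finset A} (h : W.Nonempty) :
    worstIn L W ∈ W := by
  unfold worstIn; rw [dif_pos h]; exact @Finset.min'_mem A L W h

lemma worstIn_le [Nonempty A] (L : Ballot A) {W : Finset A} (h : W.Nonempty) {x : A} (hx : x ∈ W) :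
    L.le (worstIn L W) x := by
  unfold worstIn; rw [dif_pos h]; exact @Finset.min'_le A L W x hx

lemma rk_bestIn_pair [Fintype A] [DecidableEq A] [Nonempty A] (M : Ballot A) (u v : A) :
    rk M (bestIn M {u, v}) = max (rk M u) (rk M v) := by
  have hne : ({u, v} : Finset A).Nonempty := ⟨u, Finset.mem_insert_self u {v}⟩
  have hm := bestIn_mem M hne
  have h1 := rk_le_of_le M (le_bestIn M hne (Finset.mem_insert_self u {v}))
  have h2 := rk_le_of_le M (le_bestIn M hne (Finset.mem_insert_of_mem (Finset.mem_singleton_self v)))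
  have h3 : rk M (bestIn M {u, v}) = rk M u ∨ rk M (bestIn M {u, v}) = rk M v := by
    rcases Finset.mem_insert.mp hm with h | h
    · left; rw [h]
    · right; rw [Finset.mem_singleton.mp h]
  omega

lemma rk_worstIn_pair [Fintype A] [DecidableEq A] [Nonempty A] (M : Ballot A) (u v : A) :
    rk M (worstIn M {u, v}) = min (rk M u) (rk M v) := by
  have hne : ({u, v} : Finset A).Nonempty := ⟨u, Finset.mem_insert_self u {v}⟩
  have hm := worstIn_mem M hne
  have h1 := rk_le_of_le M (worstIn_le M hne (Finset.mem_insert_self u {v}))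
  have h2 := rk_le_of_le M (worstIn_le M hne (Finset.mem_insert_of_mem (Finset.mem_singleton_self v)))
  have h3 : rk M (worstIn M {u, v}) = rk M u ∨ rk M (worstIn M {u, v}) = rk M v := by
    rcases Finset.mem_insert.mp hm with h | h
    · left; rw [h]
    · right; rw [Finset.mem_singleton.mp h]
  omega

lemma swapBallot_lt [DecidableEq A] (L : Ballot A) (s t x y : A) :
    (swapBallot L s t).lt x y ↔ L.lt (Equiv.swap s t x) (Equiv.swap s t y) := by
  have h1 := @lt_iff_le_not_ge A
    (@PartialOrder.toPreorder A (@LinearOrder.toPartialOrder A (swapBallot L s t))) x y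
  have h2 := @lt_iff_le_not_ge A (@PartialOrder.toPreorder A (@LinearOrder.toPartialOrder A L))
    (Equiv.swap s t x) (Equiv.swap s t y)
  rw [h1, h2]
  constructor
  · intro h; exact h
  · intro h; exact h

lemma rk_swapBallot [Fintype A] [DecidableEq A] (L : Ballot A) (s t x : A) :
    rk (swapBallot L s t) x = rk L (Equiv.swap s t x) := by
  unfold rk
  apply Finset.card_bij (fun z _ => Equiv.swap s t z)
  · intro z hz
    rw [mem_below] at hz ⊢
    rwa [swapBallot_lt] at hz
  · intro z1 _ z2 _ h
    exact (Equiv.swap s t).injective h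
  · intro z hz
    refine ⟨Equiv.swap s t z, ?_, ?_⟩
    · rw [mem_below, swapBallot_lt, Equiv.swap_apply_self]
      rwa [mem_below] at hz
    · exact Equiv.swap_apply_self s t z

lemma swap_cases [Fintype A] [DecidableEq A] (L : Ballot A) (s t x : A) :
    (rk L x = rk L s ∧ rk (swapBallot L s t) x = rk L t) ∨
    (rk L x = rk L t ∧ rk (swapBallot L s t) x = rk L s) ∨
    (rk L x ≠ rk L s ∧ rk L x ≠ rk L t ∧ rk (swapBallot L s t) x = rk L x) := by
  by_cases hxs : x = s
  · subst hxs
    exact Or.inl ⟨rfl, by rw [rk_swapBallot, Equiv.swap_apply_left]⟩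
  · by_cases hxt : x = t
    · subst hxt
      exact Or.inr (Or.inl ⟨rfl, by rw [rk_swapBallot, Equiv.swap_apply_right]⟩)
    · refine Or.inr (Or.inr ⟨fun h => hxs ((rk_eq_iff L x s).mp h),
        fun h => hxt ((rk_eq_iff L x t).mp h), ?_⟩)
      rw [rk_swapBallot, Equiv.swap_apply_of_ne_of_ne hxs hxt]

set_option maxHeartbeats 1000000 in
lemma swap_core (fa fb fc fd fs ft ga gb gc gd : ℕ)
 (hab : fa ≠ fb) (hcd : fc ≠ fd) (hst : ft = fs + 1)
 (ha : (fa = fs ∧ ga = ft) ∨ (fa = ft ∧ ga = fs) ∨ (fa ≠ fs ∧ fa ≠ ft ∧ ga = fa))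
 (hb : (fb = fs ∧ gb = ft) ∨ (fb = ft ∧ gb = fs) ∨ (fb ≠ fs ∧ fb ≠ ft ∧ gb = fb))
 (hc : (fc = fs ∧ gc = ft) ∨ (fc = ft ∧ gc = fs) ∨ (fc ≠ fs ∧ fc ≠ ft ∧ gc = fc))
 (hd : (fd = fs ∧ gd = ft) ∨ (fd = ft ∧ gd = fs) ∨ (fd ≠ fs ∧ fd ≠ ft ∧ gd = fd))
 (h1 : max fc fd ≤ max fa fb) (h2 : min fc fd ≤ min fa fb)
 (h3 : max ga gb ≤ max gc gd) (h4 : min ga gb ≤ min gc gd) :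
 ((fc = fa ∧ fd = fb) ∨ (fc = fb ∧ fd = fa)) ∨
  (fs ≠ fa ∧ fs ≠ fb ∧
    ((ft = fa ∧ ((fc = fs ∧ fd = fb) ∨ (fc = fb ∧ fd = fs))) ∨
     (ft = fb ∧ ((fc = fs ∧ fd = fa) ∨ (fc = fa ∧ fd = fs))))) := by
  rcases ha with ⟨a1,a2⟩|⟨a1,a2⟩|⟨a1,a2,a3⟩
  · rcases hb with ⟨b1,b2⟩|⟨b1,b2⟩|⟨b1,b2,b3⟩
    · rcases hc with ⟨c1,c2⟩|⟨c1,c2⟩|⟨c1,c2,c3⟩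
      · rcases hd with ⟨d1,d2⟩|⟨d1,d2⟩|⟨d1,d2,d3⟩
        · subst a2 a1 b2 b1 c2 c1 d2 d1 hst
          exact Or.inl (by omega)
        · subst a2 a1 b2 b1 c2 c1 d2 d1 hst
          exact Or.inl (by omega)
        · subst a2 a1 b2 b1 c2 c1 d3 hst
          exact Or.inl (by omega)
      · rcases hd with ⟨d1,d2⟩|⟨d1,d2⟩|⟨d1,d2,d3⟩
        · subst a2 a1 b2 b1 c2 c1 d2 d1 hst
          exact Or.inl (by omega)
        · subst a2 a1 b2 b1 c2 c1 d2 d1 hst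
          exact Or.inl (by omega)
        · subst a2 a1 b2 b1 c2 c1 d3 hst
          exact Or.inl (by omega)
      · rcases hd with ⟨d1,d2⟩|⟨d1,d2⟩|⟨d1,d2,d3⟩
        · subst a2 a1 b2 b1 c3 d2 d1 hst
          exact Or.inl (by omega)
        · subst a2 a1 b2 b1 c3 d2 d1 hst
          exact Or.inl (by omega)
        · subst a2 a1 b2 b1 c3 d3 hst
          exact Or.inl (by omega)
    · rcases hc with ⟨c1,c2⟩|⟨c1,c2⟩|⟨c1,c2,c3⟩
      · rcases hd with ⟨d1,d2⟩|⟨d1,d2⟩|⟨d1,d2,d3⟩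
        · subst a2 a1 b2 b1 c2 c1 d2 d1 hst
          exact Or.inl (by omega)
        · subst a2 a1 b2 b1 c2 c1 d2 d1 hst
          exact Or.inl (by omega)
        · subst a2 a1 b2 b1 c2 c1 d3 hst
          exact Or.inl (by omega)
      · rcases hd with ⟨d1,d2⟩|⟨d1,d2⟩|⟨d1,d2,d3⟩
        · subst a2 a1 b2 b1 c2 c1 d2 d1 hst
          exact Or.inl (by omega)
        · subst a2 a1 b2 b1 c2 c1 d2 d1 hst
          exact Or.inl (by omega)
        · subst a2 a1 b2 b1 c2 c1 d3 hst
          exact Or.inl (by omega)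
      · rcases hd with ⟨d1,d2⟩|⟨d1,d2⟩|⟨d1,d2,d3⟩
        · subst a2 a1 b2 b1 c3 d2 d1 hst
          exact Or.inl (by omega)
        · subst a2 a1 b2 b1 c3 d2 d1 hst
          exact Or.inl (by omega)
        · subst a2 a1 b2 b1 c3 d3 hst
          exact Or.inl (by omega)
    · rcases hc with ⟨c1,c2⟩|⟨c1,c2⟩|⟨c1,c2,c3⟩
      · rcases hd with ⟨d1,d2⟩|⟨d1,d2⟩|⟨d1,d2,d3⟩
        · subst a2 a1 b3 c2 c1 d2 d1 hst
          exact Or.inl (by omega)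
        · subst a2 a1 b3 c2 c1 d2 d1 hst
          exact Or.inl (by omega)
        · subst a2 a1 b3 c2 c1 d3 hst
          exact Or.inl (by omega)
      · rcases hd with ⟨d1,d2⟩|⟨d1,d2⟩|⟨d1,d2,d3⟩
        · subst a2 a1 b3 c2 c1 d2 d1 hst
          exact Or.inl (by omega)
        · subst a2 a1 b3 c2 c1 d2 d1 hst
          exact Or.inl (by omega)
        · subst a2 a1 b3 c2 c1 d3 hst
          exact Or.inl (by omega)
      · rcases hd with ⟨d1,d2⟩|⟨d1,d2⟩|⟨d1,d2,d3⟩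
        · subst a2 a1 b3 c3 d2 d1 hst
          exact Or.inl (by omega)
        · subst a2 a1 b3 c3 d2 d1 hst
          exact Or.inl (by omega)
        · subst a2 a1 b3 c3 d3 hst
          exact Or.inl (by omega)
  · rcases hb with ⟨b1,b2⟩|⟨b1,b2⟩|⟨b1,b2,b3⟩
    · rcases hc with ⟨c1,c2⟩|⟨c1,c2⟩|⟨c1,c2,c3⟩
      · rcases hd with ⟨d1,d2⟩|⟨d1,d2⟩|⟨d1,d2,d3⟩
        · subst a2 a1 b2 b1 c2 c1 d2 d1 hst
          exact Or.inl (by omega)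
        · subst a2 a1 b2 b1 c2 c1 d2 d1 hst
          exact Or.inl (by omega)
        · subst a2 a1 b2 b1 c2 c1 d3 hst
          exact Or.inl (by omega)
      · rcases hd with ⟨d1,d2⟩|⟨d1,d2⟩|⟨d1,d2,d3⟩
        · subst a2 a1 b2 b1 c2 c1 d2 d1 hst
          exact Or.inl (by omega)
        · subst a2 a1 b2 b1 c2 c1 d2 d1 hst
          exact Or.inl (by omega)
        · subst a2 a1 b2 b1 c2 c1 d3 hst
          exact Or.inl (by omega)
      · rcases hd with ⟨d1,d2⟩|⟨d1,d2⟩|⟨d1,d2,d3⟩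
        · subst a2 a1 b2 b1 c3 d2 d1 hst
          exact Or.inl (by omega)
        · subst a2 a1 b2 b1 c3 d2 d1 hst
          exact Or.inl (by omega)
        · subst a2 a1 b2 b1 c3 d3 hst
          exact Or.inl (by omega)
    · rcases hc with ⟨c1,c2⟩|⟨c1,c2⟩|⟨c1,c2,c3⟩
      · rcases hd with ⟨d1,d2⟩|⟨d1,d2⟩|⟨d1,d2,d3⟩
        · subst a2 a1 b2 b1 c2 c1 d2 d1 hst
          exact Or.inr ⟨by omega, by omega, Or.inl ⟨by omega, by omega⟩⟩
        · subst a2 a1 b2 b1 c2 c1 d2 d1 hst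
          exact Or.inr ⟨by omega, by omega, Or.inl ⟨by omega, by omega⟩⟩
        · subst a2 a1 b2 b1 c2 c1 d3 hst
          exact Or.inr ⟨by omega, by omega, Or.inl ⟨by omega, by omega⟩⟩
      · rcases hd with ⟨d1,d2⟩|⟨d1,d2⟩|⟨d1,d2,d3⟩
        · subst a2 a1 b2 b1 c2 c1 d2 d1 hst
          exact Or.inr ⟨by omega, by omega, Or.inl ⟨by omega, by omega⟩⟩
        · subst a2 a1 b2 b1 c2 c1 d2 d1 hst
          exact Or.inl (by omega)
        · subst a2 a1 b2 b1 c2 c1 d3 hst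
          exact Or.inl (by omega)
      · rcases hd with ⟨d1,d2⟩|⟨d1,d2⟩|⟨d1,d2,d3⟩
        · subst a2 a1 b2 b1 c3 d2 d1 hst
          exact Or.inr ⟨by omega, by omega, Or.inl ⟨by omega, by omega⟩⟩
        · subst a2 a1 b2 b1 c3 d2 d1 hst
          exact Or.inl (by omega)
        · subst a2 a1 b2 b1 c3 d3 hst
          exact Or.inl (by omega)
    · rcases hc with ⟨c1,c2⟩|⟨c1,c2⟩|⟨c1,c2,c3⟩
      · rcases hd with ⟨d1,d2⟩|⟨d1,d2⟩|⟨d1,d2,d3⟩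
        · subst a2 a1 b3 c2 c1 d2 d1 hst
          exact Or.inr ⟨by omega, by omega, Or.inl ⟨by omega, by omega⟩⟩
        · subst a2 a1 b3 c2 c1 d2 d1 hst
          exact Or.inr ⟨by omega, by omega, Or.inl ⟨by omega, by omega⟩⟩
        · subst a2 a1 b3 c2 c1 d3 hst
          exact Or.inr ⟨by omega, by omega, Or.inl ⟨by omega, by omega⟩⟩
      · rcases hd with ⟨d1,d2⟩|⟨d1,d2⟩|⟨d1,d2,d3⟩
        · subst a2 a1 b3 c2 c1 d2 d1 hst
          exact Or.inr ⟨by omega, by omega, Or.inl ⟨by omega, by omega⟩⟩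
        · subst a2 a1 b3 c2 c1 d2 d1 hst
          exact Or.inl (by omega)
        · subst a2 a1 b3 c2 c1 d3 hst
          exact Or.inl (by omega)
      · rcases hd with ⟨d1,d2⟩|⟨d1,d2⟩|⟨d1,d2,d3⟩
        · subst a2 a1 b3 c3 d2 d1 hst
          exact Or.inr ⟨by omega, by omega, Or.inl ⟨by omega, by omega⟩⟩
        · subst a2 a1 b3 c3 d2 d1 hst
          exact Or.inl (by omega)
        · subst a2 a1 b3 c3 d3 hst
          exact Or.inl (by omega)
  · rcases hb with ⟨b1,b2⟩|⟨b1,b2⟩|⟨b1,b2,b3⟩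
    · rcases hc with ⟨c1,c2⟩|⟨c1,c2⟩|⟨c1,c2,c3⟩
      · rcases hd with ⟨d1,d2⟩|⟨d1,d2⟩|⟨d1,d2,d3⟩
        · subst a3 b2 b1 c2 c1 d2 d1 hst
          exact Or.inl (by omega)
        · subst a3 b2 b1 c2 c1 d2 d1 hst
          exact Or.inl (by omega)
        · subst a3 b2 b1 c2 c1 d3 hst
          exact Or.inl (by omega)
      · rcases hd with ⟨d1,d2⟩|⟨d1,d2⟩|⟨d1,d2,d3⟩
        · subst a3 b2 b1 c2 c1 d2 d1 hst
          exact Or.inl (by omega)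
        · subst a3 b2 b1 c2 c1 d2 d1 hst
          exact Or.inl (by omega)
        · subst a3 b2 b1 c2 c1 d3 hst
          exact Or.inl (by omega)
      · rcases hd with ⟨d1,d2⟩|⟨d1,d2⟩|⟨d1,d2,d3⟩
        · subst a3 b2 b1 c3 d2 d1 hst
          exact Or.inl (by omega)
        · subst a3 b2 b1 c3 d2 d1 hst
          exact Or.inl (by omega)
        · subst a3 b2 b1 c3 d3 hst
          exact Or.inl (by omega)
    · rcases hc with ⟨c1,c2⟩|⟨c1,c2⟩|⟨c1,c2,c3⟩
      · rcases hd with ⟨d1,d2⟩|⟨d1,d2⟩|⟨d1,d2,d3⟩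
        · subst a3 b2 b1 c2 c1 d2 d1 hst
          exact Or.inr ⟨by omega, by omega, Or.inr ⟨by omega, by omega⟩⟩
        · subst a3 b2 b1 c2 c1 d2 d1 hst
          exact Or.inr ⟨by omega, by omega, Or.inr ⟨by omega, by omega⟩⟩
        · subst a3 b2 b1 c2 c1 d3 hst
          exact Or.inr ⟨by omega, by omega, Or.inr ⟨by omega, by omega⟩⟩
      · rcases hd with ⟨d1,d2⟩|⟨d1,d2⟩|⟨d1,d2,d3⟩
        · subst a3 b2 b1 c2 c1 d2 d1 hst
          exact Or.inr ⟨by omega, by omega, Or.inr ⟨by omega, by omega⟩⟩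
        · subst a3 b2 b1 c2 c1 d2 d1 hst
          exact Or.inl (by omega)
        · subst a3 b2 b1 c2 c1 d3 hst
          exact Or.inl (by omega)
      · rcases hd with ⟨d1,d2⟩|⟨d1,d2⟩|⟨d1,d2,d3⟩
        · subst a3 b2 b1 c3 d2 d1 hst
          exact Or.inr ⟨by omega, by omega, Or.inr ⟨by omega, by omega⟩⟩
        · subst a3 b2 b1 c3 d2 d1 hst
          exact Or.inl (by omega)
        · subst a3 b2 b1 c3 d3 hst
          exact Or.inl (by omega)
    · rcases hc with ⟨c1,c2⟩|⟨c1,c2⟩|⟨c1,c2,c3⟩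
      · rcases hd with ⟨d1,d2⟩|⟨d1,d2⟩|⟨d1,d2,d3⟩
        · subst a3 b3 c2 c1 d2 d1 hst
          exact Or.inl (by omega)
        · subst a3 b3 c2 c1 d2 d1 hst
          exact Or.inl (by omega)
        · subst a3 b3 c2 c1 d3 hst
          exact Or.inl (by omega)
      · rcases hd with ⟨d1,d2⟩|⟨d1,d2⟩|⟨d1,d2,d3⟩
        · subst a3 b3 c2 c1 d2 d1 hst
          exact Or.inl (by omega)
        · subst a3 b3 c2 c1 d2 d1 hst
          exact Or.inl (by omega)
        · subst a3 b3 c2 c1 d3 hst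
          exact Or.inl (by omega)
      · rcases hd with ⟨d1,d2⟩|⟨d1,d2⟩|⟨d1,d2,d3⟩
        · subst a3 b3 c3 d2 d1 hst
          exact Or.inl (by omega)
        · subst a3 b3 c3 d2 d1 hst
          exact Or.inl (by omega)
        · subst a3 b3 c3 d3 hst
          exact Or.inl (by omega)



variable [DecidableEq V] [Fintype A] [DecidableEq A] [Nonempty A]

noncomputable def ovSet [Fintype A] (L L' : Ballot A) (s : A) : Finset A :=
  @Finset.filter A (fun x => L'.lt x s ∧ ¬ L.lt x s) (Classical.decPred _) Finset.univ

lemma mem_ovSet [Fintype A] (L L' : Ballot A) (s x : A) :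
    x ∈ ovSet L L' s ↔ (L'.lt x s ∧ ¬ L.lt x s) := by
  unfold ovSet
  have h := @Finset.mem_filter A (fun x => L'.lt x s ∧ ¬ L.lt x s) (Classical.decPred _)
    Finset.univ x
  rw [h]
  exact ⟨fun h => h.2, fun h => ⟨Finset.mem_univ _, h⟩⟩

lemma eq_step (F : Profile V A → Finset A) (hcomm : ∀ P, (F P).card = 2)
    (hSPP : SPP F) (hSPO : SPO F) (Q : Profile V A) (i : V) (L₁ : Ballot A)
    (hsame : ∀ x y, L₁.lt x y ↔ (Q i).lt x y) :
    F (Function.update Q i L₁) = F Q := by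
  obtain ⟨a, b, hab, hFQ⟩ := Finset.card_eq_two.mp (hcomm Q)
  obtain ⟨c, d, hcd, hFQ'⟩ := Finset.card_eq_two.mp (hcomm (Function.update Q i L₁))
  have hQback : Function.update (Function.update Q i L₁) i (Q i) = Q := by
    rw [Function.update_idem, Function.update_eq_self]
  have h1 := hSPO Q i L₁
  have h2 := hSPP Q i L₁
  have h3 := hSPO (Function.update Q i L₁) i (Q i)
  have h4 := hSPP (Function.update Q i L₁) i (Q i)
  rw [hQback] at h3 h4
  rw [Function.update_self] at h3 h4
  rw [hFQ, hFQ'] at h1 h2 h3 h4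
  have n1 := rk_le_of_le (Q i) h1
  have n2 := rk_le_of_le (Q i) h2
  have n3 := rk_le_of_le L₁ h3
  have n4 := rk_le_of_le L₁ h4
  rw [rk_bestIn_pair, rk_bestIn_pair] at n1 n3
  rw [rk_worstIn_pair, rk_worstIn_pair] at n2 n4
  simp only [rk_same (Q i) L₁ hsame] at n3 n4
  have hab' : rk (Q i) a ≠ rk (Q i) b := fun h => hab ((rk_eq_iff (Q i) a b).mp h)
  have hcd' : rk (Q i) c ≠ rk (Q i) d := fun h => hcd ((rk_eq_iff (Q i) c d).mp h)
  have goal : (rk (Q i) c = rk (Q i) a ∧ rk (Q i) d = rk (Q i) b) ∨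
      (rk (Q i) c = rk (Q i) b ∧ rk (Q i) d = rk (Q i) a) := by omega
  rcases goal with ⟨h5, h6⟩ | ⟨h5, h6⟩
  · rw [hFQ', hFQ, (rk_eq_iff (Q i) c a).mp h5, (rk_eq_iff (Q i) d b).mp h6]
  · rw [hFQ', hFQ, (rk_eq_iff (Q i) c b).mp h5, (rk_eq_iff (Q i) d a).mp h6, Finset.pair_comm]

lemma swap_step (F : Profile V A → Finset A) (hcomm : ∀ P, (F P).card = 2)
    (hSPP : SPP F) (hSPO : SPO F) (Q : Profile V A) (i : V) (s t : A)
    (hst : (Q i).lt s t) (hadj : ∀ z, ¬((Q i).lt s z ∧ (Q i).lt z t))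
    (a b : A) (hab : a ≠ b) (hFQ : F Q = {a, b}) :
    F (Function.update Q i (swapBallot (Q i) s t)) = {a, b} ∨
      (s ∉ ({a, b} : Finset A) ∧ ∃ w : A, ({t, w} : Finset A) = {a, b} ∧ w ≠ s ∧
        F (Function.update Q i (swapBallot (Q i) s t)) = {s, w}) := by
  obtain ⟨c, d, hcd, hFQ'⟩ :=
    Finset.card_eq_two.mp (hcomm (Function.update Q i (swapBallot (Q i) s t)))
  have hQback : Function.update (Function.update Q i (swapBallot (Q i) s t)) i (Q i) = Q := by
    rw [Function.update_idem, Function.update_eq_self]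
  have h1 := hSPO Q i (swapBallot (Q i) s t)
  have h2 := hSPP Q i (swapBallot (Q i) s t)
  have h3 := hSPO (Function.update Q i (swapBallot (Q i) s t)) i (Q i)
  have h4 := hSPP (Function.update Q i (swapBallot (Q i) s t)) i (Q i)
  rw [hQback] at h3 h4
  rw [Function.update_self] at h3 h4
  rw [hFQ, hFQ'] at h1 h2 h3 h4
  have n1 := rk_le_of_le (Q i) h1
  have n2 := rk_le_of_le (Q i) h2
  have n3 := rk_le_of_le (swapBallot (Q i) s t) h3
  have n4 := rk_le_of_le (swapBallot (Q i) s t) h4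
  rw [rk_bestIn_pair, rk_bestIn_pair] at n1 n3
  rw [rk_worstIn_pair, rk_worstIn_pair] at n2 n4
  have core := swap_core (rk (Q i) a) (rk (Q i) b) (rk (Q i) c) (rk (Q i) d)
      (rk (Q i) s) (rk (Q i) t)
      (rk (swapBallot (Q i) s t) a) (rk (swapBallot (Q i) s t) b)
      (rk (swapBallot (Q i) s t) c) (rk (swapBallot (Q i) s t) d)
      (fun h => hab ((rk_eq_iff (Q i) a b).mp h))
      (fun h => hcd ((rk_eq_iff (Q i) c d).mp h))
      (rk_succ (Q i) hst hadj)
      (swap_cases (Q i) s t a) (swap_cases (Q i) s t b)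
      (swap_cases (Q i) s t c) (swap_cases (Q i) s t d)
      n1 n2 n3 n4
  rcases core with hTS | ⟨hsa, hsb, hrest⟩
  · left
    rcases hTS with ⟨h5, h6⟩ | ⟨h5, h6⟩
    · rw [hFQ', (rk_eq_iff (Q i) c a).mp h5, (rk_eq_iff (Q i) d b).mp h6]
    · rw [hFQ', (rk_eq_iff (Q i) c b).mp h5, (rk_eq_iff (Q i) d a).mp h6, Finset.pair_comm]
  · right
    have hsa' : s ≠ a := fun h => hsa (congrArg (rk (Q i)) h.symm).symm
    have hsb' : s ≠ b := fun h => hsb (congrArg (rk (Q i)) h.symm).symm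
    refine ⟨?_, ?_⟩
    · intro hmem
      rcases Finset.mem_insert.mp hmem with h | h
      · exact hsa' h
      · exact hsb' (Finset.mem_singleton.mp h)
    · rcases hrest with ⟨hta, hcd2⟩ | ⟨htb, hcd2⟩
      · have hta' : t = a := (rk_eq_iff (Q i) t a).mp hta
        refine ⟨b, by rw [hta'], fun h => hsb (congrArg (rk (Q i)) h).symm, ?_⟩
        rcases hcd2 with ⟨h5, h6⟩ | ⟨h5, h6⟩
        · rw [hFQ', (rk_eq_iff (Q i) c s).mp h5, (rk_eq_iff (Q i) d b).mp h6]
        · rw [hFQ', (rk_eq_iff (Q i) c b).mp h5, (rk_eq_iff (Q i) d s).mp h6, Finset.pair_comm]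
      · have htb' : t = b := (rk_eq_iff (Q i) t b).mp htb
        refine ⟨a, by rw [htb', Finset.pair_comm], fun h => hsa (congrArg (rk (Q i)) h).symm, ?_⟩
        rcases hcd2 with ⟨h5, h6⟩ | ⟨h5, h6⟩
        · rw [hFQ', (rk_eq_iff (Q i) c s).mp h5, (rk_eq_iff (Q i) d a).mp h6]
        · rw [hFQ', (rk_eq_iff (Q i) c a).mp h5, (rk_eq_iff (Q i) d s).mp h6, Finset.pair_comm]


lemma key_base (F : Profile V A → Finset A) (hcomm : ∀ P, (F P).card = 2)
    (hSPP : SPP F) (hSPO : SPO F) (P : Profile V A) (i : V) (s : A)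
    (L L' : Ballot A) (hempty : ovSet L L' s = ∅) (hup : MovedUp L L' s) :
    F (Function.update P i L') = F (Function.update P i L) := by
  have hno : ∀ x, L'.lt x s → L.lt x s := by
    intro x hx
    by_contra h
    have hmem : x ∈ ovSet L L' s := (mem_ovSet L L' s x).mpr ⟨hx, h⟩
    rw [hempty] at hmem
    exact absurd hmem (Finset.notMem_empty x)
  have hsame : ∀ x y, L'.lt x y ↔ L.lt x y := by
    intro x y
    by_cases hx : x = s
    · rw [hx]
      by_cases hy : y = s
      · rw [hy]
        exact iff_of_false (blt_irrefl L' s) (blt_irrefl L s)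
      · constructor
        · intro h
          rcases blt_tri L s y with h' | h' | h'
          · exact h'
          · exact absurd h'.symm hy
          · exact absurd (hup.2 y h') (blt_asymm L' h)
        · intro h
          rcases blt_tri L' s y with h' | h' | h'
          · exact h'
          · exact absurd h'.symm hy
          · exact absurd (hno y h') (blt_asymm L h)
    · by_cases hy : y = s
      · rw [hy]
        exact Iff.intro (hno x) (hup.2 x)
      · exact hup.1 x y hx hy
  have h := eq_step F hcomm hSPP hSPO (Function.update P i L) i L'
    (by rw [Function.update_self]; exact hsame)
  rwa [Function.update_idem] at h

lemma key (F : Profile V A → Finset A) (hcomm : ∀ P, (F P).card = 2)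
    (hSPP : SPP F) (hSPO : SPO F) (P : Profile V A) (i : V) (s : A) :
    ∀ (n : ℕ) (L L' : Ballot A), (ovSet L L' s).card ≤ n → MovedUp L L' s →
    ∀ a b : A, a ≠ b → F (Function.update P i L) = {a, b} →
    (F (Function.update P i L') = {a, b} ∨
      (s ∉ ({a, b} : Finset A) ∧ ∃ x y : A, ({x, y} : Finset A) = {a, b} ∧
        F (Function.update P i L') = {s, x} ∧ L.lt s y ∧ L'.lt y s)) := by
  intro n
  induction n with
  | zero =>
    intro L L' hcard hup a b hab hF
    have hempty : ovSet L L' s = ∅ := Finset.card_eq_zero.mp (by omega)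
    exact Or.inl ((key_base F hcomm hSPP hSPO P i s L L' hempty hup).trans hF)
  | succ n IH =>
    intro L L' hcard hup a b hab hF
    by_cases hD : (ovSet L L' s).card = 0
    · have hempty : ovSet L L' s = ∅ := Finset.card_eq_zero.mp hD
      exact Or.inl ((key_base F hcomm hSPP hSPO P i s L L' hempty hup).trans hF)
    · have hne : (ovSet L L' s).Nonempty := Finset.card_pos.mp (by omega)
      obtain ⟨t, htD, htmin⟩ : ∃ t, t ∈ ovSet L L' s ∧ ∀ z ∈ ovSet L L' s, L.le t z :=
        ⟨@Finset.min' A L _ hne, @Finset.min'_mem A L _ hne,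
          fun z hz => @Finset.min'_le A L _ z hz⟩
      obtain ⟨hts', hnts⟩ := (mem_ovSet L L' s t).mp htD
      have htns : t ≠ s := by
        intro h; rw [h] at hts'; exact blt_irrefl L' s hts'
      have hst : L.lt s t := by
        rcases blt_tri L s t with h | h | h
        · exact h
        · exact absurd h.symm htns
        · exact absurd h hnts
      have hsnt : s ≠ t := blt_ne L hst
      have hadj : ∀ z, ¬(L.lt s z ∧ L.lt z t) := by
        rintro z ⟨hz1, hz2⟩
        have hzs : z ≠ s := by intro h; rw [h] at hz1; exact blt_irrefl L s hz1
        have hzt : z ≠ t := by intro h; rw [h] at hz2; exact blt_irrefl L t hz2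
        have hz's : L'.lt z s := by
          rcases blt_tri L' z s with h | h | h
          · exact h
          · exact absurd h hzs
          · have h5 : L'.lt t z := blt_trans L' hts' h
            have h6 : L.lt t z := (hup.1 t z htns hzs).mp h5
            exact absurd h6 (blt_asymm L hz2)
        have hzD : z ∈ ovSet L L' s := (mem_ovSet L L' s z).mpr ⟨hz's, blt_asymm L hz1⟩
        exact absurd hz2 (bnot_lt_of_le L (htmin z hzD))
      have hiff1 : ∀ z, z ≠ s → z ≠ t → (L.lt z s ↔ L.lt z t) := by
        intro z hzs hzt
        constructor
        · intro h; exact blt_trans L h hst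
        · intro h
          rcases blt_tri L z s with h' | h' | h'
          · exact h'
          · exact absurd h' hzs
          · exact absurd ⟨h', h⟩ (hadj z)
      have hiff2 : ∀ z, z ≠ s → z ≠ t → (L.lt s z ↔ L.lt t z) := by
        intro z hzs hzt
        constructor
        · intro h
          rcases blt_tri L t z with h' | h' | h'
          · exact h'
          · exact absurd h'.symm hzt
          · exact absurd ⟨h, h'⟩ (hadj z)
        · intro h; exact blt_trans L hst h
      have hpair : ∀ x y, ¬(x = s ∧ y = t) → ¬(x = t ∧ y = s) →
          ((swapBallot L s t).lt x y ↔ L.lt x y) := by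
        intro x y g1 g2
        rw [swapBallot_lt]
        by_cases hxs : x = s
        · rw [hxs]
          by_cases hys : y = s
          · rw [hys, Equiv.swap_apply_left]
            exact iff_of_false (blt_irrefl L t) (blt_irrefl L s)
          · by_cases hyt : y = t
            · exact absurd ⟨hxs, hyt⟩ g1
            · rw [Equiv.swap_apply_left, Equiv.swap_apply_of_ne_of_ne hys hyt]
              exact (hiff2 y hys hyt).symm
        · by_cases hxt : x = t
          · rw [hxt]
            by_cases hys : y = s
            · exact absurd ⟨hxt, hys⟩ g2
            · by_cases hyt : y = t
              · rw [hyt, Equiv.swap_apply_right]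
                exact iff_of_false (blt_irrefl L s) (blt_irrefl L t)
              · rw [Equiv.swap_apply_right, Equiv.swap_apply_of_ne_of_ne hys hyt]
                exact hiff2 y hys hyt
          · rw [Equiv.swap_apply_of_ne_of_ne hxs hxt]
            by_cases hys : y = s
            · rw [hys, Equiv.swap_apply_left]
              exact (hiff1 x hxs hxt).symm
            · by_cases hyt : y = t
              · rw [hyt, Equiv.swap_apply_right]
                exact hiff1 x hxs hxt
              · rw [Equiv.swap_apply_of_ne_of_ne hys hyt]
      have hts₁ : (swapBallot L s t).lt t s := by
        rw [swapBallot_lt, Equiv.swap_apply_right, Equiv.swap_apply_left]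
        exact hst
      have hupB : MovedUp (swapBallot L s t) L' s := by
        constructor
        · intro x y hx hy
          exact (hup.1 x y hx hy).trans
            (hpair x y (fun h => hx h.1) (fun h => hy h.2)).symm
        · intro x hx
          by_cases hxt : x = t
          · rw [hxt]; exact hts'
          · have hxs : x ≠ s := by
              intro h; rw [h] at hx; exact blt_irrefl (swapBallot L s t) s hx
            exact hup.2 x ((hpair x s (fun h => hxs h.1) (fun h => hxt h.1)).mp hx)
      have hov : ovSet (swapBallot L s t) L' s = (ovSet L L' s).erase t := by
        ext z
        rw [mem_ovSet, Finset.mem_erase, mem_ovSet]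
        constructor
        · rintro ⟨h1, h2⟩
          have hzt : z ≠ t := by intro h; rw [h] at h2; exact h2 hts₁
          have hzs : z ≠ s := by intro h; rw [h] at h1; exact blt_irrefl L' s h1
          exact ⟨hzt, h1, fun h3 =>
            h2 ((hpair z s (fun h => hzs h.1) (fun h => hzt h.1)).mpr h3)⟩
        · rintro ⟨hzt, h1, h2⟩
          have hzs : z ≠ s := by intro h; rw [h] at h1; exact blt_irrefl L' s h1
          exact ⟨h1, fun h3 =>
            h2 ((hpair z s (fun h => hzs h.1) (fun h => hzt h.1)).mp h3)⟩
      have hcard' : (ovSet (swapBallot L s t) L' s).card ≤ n := by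
        rw [hov, Finset.card_erase_of_mem htD]
        omega
      have hQi : (Function.update P i L) i = L := Function.update_self i L P
      have hswap := swap_step F hcomm hSPP hSPO (Function.update P i L) i s t
        (by rw [hQi]; exact hst) (by rw [hQi]; exact hadj) a b hab hF
      rw [hQi, Function.update_idem] at hswap
      rcases hswap with hcase | ⟨hsnot, w, hw, hws, hFw⟩
      · rcases IH (swapBallot L s t) L' hcard' hupB a b hab hcase with
          h | ⟨hs2, x, y, hxy, hFxy, hsy, hys⟩
        · exact Or.inl h
        · refine Or.inr ⟨hs2, x, y, hxy, hFxy, ?_, hys⟩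
          by_cases hyt : y = t
          · rw [hyt] at hsy
            exact absurd hsy (blt_asymm (swapBallot L s t) hts₁)
          · exact (hpair s y (fun h => hyt h.2) (fun h => hsnt h.1)).mp hsy
      · have hsw : s ≠ w := fun h => hws h.symm
        rcases IH (swapBallot L s t) L' hcard' hupB s w hsw hFw with h | ⟨hs2, _⟩
        · exact Or.inr ⟨hsnot, w, t, (Finset.pair_comm w t).trans hw, h, hst, hts'⟩
        · exact absurd (Finset.mem_insert_self s {w}) hs2

end ConsularAux


/-- Upwards monotonicity. -/
theorem statement_3 {V A : Type*} [Fintype V] [Nonempty V] [DecidableEq V] [Fintype A] [DecidableEq A] [Nonempty A]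
    (F : Profile V A → Finset A) (hcomm : ∀ P, (F P).card = 2)
    (hSPP : SPP F) (hSPO : SPO F)
    (P : Profile V A) (i : V) (a b : A) (hab : F P = {a, b})
    (s : A) (Pi' : Ballot A) (hup : MovedUp (P i) Pi' s) :
    ((s = a ∨ s = b) → F (Function.update P i Pi') = F P) ∧
    (s ≠ a → s ≠ b →
      (F (Function.update P i Pi') = F P ∨
        ∃ x y : A, ({x, y} : Finset A) = {a, b} ∧
          F (Function.update P i Pi') = {s, x} ∧ (P i).lt s y ∧ Pi'.lt y s)) := by
  have hne : a ≠ b := by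
    intro h
    have h2 := hcomm P
    rw [hab, h] at h2
    simp at h2
  have hF0 : F (Function.update P i (P i)) = {a, b} := by
    rw [Function.update_eq_self]; exact hab
  have h := ConsularAux.key F hcomm hSPP hSPO P i s (ConsularAux.ovSet (P i) Pi' s).card
    (P i) Pi' le_rfl hup a b hne hF0
  constructor
  · intro hs
    rcases h with h1 | ⟨hs2, _⟩
    · rw [hab]; exact h1
    · exfalso
      apply hs2
      rcases hs with h | h
      · rw [h]; exact Finset.mem_insert_self a {b}
      · rw [h]; exact Finset.mem_insert_of_mem (Finset.mem_singleton_self b)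
  · intro _ _
    rcases h with h1 | ⟨_, x, y, hxy, hFy, h5, h6⟩
    · left; rw [hab]; exact h1
    · right; exact ⟨x, y, hxy, hFy, h5, h6⟩
end

section
/- There exist a finite set A with |A| = 4, a set V of voters with |V| = 1, and a consular election rule F over (V, A) that is irreducible, satisfies SPP, SPO and weak viability, and is not onto: some 2-element subset of A is not in the range of F. -/
open Function

variable {V A : Type*}

namespace S10

def Sfun : Fin 4 → Finset (Fin 4) := ![{2,3}, {2,3}, {0,1,3}, {0,1,2}]

lemma Sne : ∀ t, (Sfun t).Nonempty := by decide

lemma Sirr : ∀ t, t ∉ Sfun t := by decide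

lemma Ssymm : ∀ a b : Fin 4, a ∈ Sfun b → b ∈ Sfun a := by decide

lemma Skey : ∀ t t' s' : Fin 4, s' ∈ Sfun t' → s' ≠ t → t' ≠ t →
    s' ∈ Sfun t ∨ t' ∈ Sfun t := by decide

lemma Snot01 : ∀ t s : Fin 4, s ∈ Sfun t → ({t, s} : Finset (Fin 4)) ≠ {0, 1} := by decide

noncomputable def topOf (L : Ballot (Fin 4)) : Fin 4 :=
  @Finset.max' _ L Finset.univ ⟨0, Finset.mem_univ 0⟩

noncomputable def secOf (L : Ballot (Fin 4)) : Fin 4 :=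
  @Finset.max' _ L (Sfun (topOf L)) (Sne _)

noncomputable def myF (P : Profile (Fin 1) (Fin 4)) : Finset (Fin 4) :=
  {topOf (P 0), secOf (P 0)}

lemma top_spec (L : Ballot (Fin 4)) (x : Fin 4) : L.le x (topOf L) :=
  @Finset.le_max' _ L _ x (Finset.mem_univ x)

lemma sec_mem (L : Ballot (Fin 4)) : secOf L ∈ Sfun (topOf L) :=
  @Finset.max'_mem _ L _ _

lemma sec_spec (L : Ballot (Fin 4)) (x : Fin 4) (hx : x ∈ Sfun (topOf L)) :
    L.le x (secOf L) :=
  @Finset.le_max' _ L _ x hx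

lemma top_ne_sec (L : Ballot (Fin 4)) : topOf L ≠ secOf L := by
  intro h
  exact Sirr (topOf L) (h ▸ sec_mem L)

lemma sec_le_top (L : Ballot (Fin 4)) : L.le (secOf L) (topOf L) := top_spec L _

lemma top_eq (L : Ballot (Fin 4)) (t : Fin 4) (h : ∀ x, L.le x t) : topOf L = t :=
  @le_antisymm _ L.toPartialOrder _ _
    (@Finset.max'_le _ L _ _ _ (fun x _ => h x)) (top_spec L t)

lemma sec_eq (L : Ballot (Fin 4)) (t s : Fin 4) (ht : topOf L = t) (hs : s ∈ Sfun t)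
    (h : ∀ x ∈ Sfun t, L.le x s) : secOf L = s :=
  @le_antisymm _ L.toPartialOrder _ _
    (@Finset.max'_le _ L _ _ _ (fun x hx => h x (ht ▸ hx)))
    (sec_spec L s (ht ▸ hs))

lemma myF_eq (P : Profile (Fin 1) (Fin 4)) (t s : Fin 4)
    (h1 : ∀ x, (P 0).le x t) (hs : s ∈ Sfun t) (h2 : ∀ x ∈ Sfun t, (P 0).le x s) :
    myF P = {t, s} := by
  rw [myF, top_eq _ t h1, sec_eq _ t s (top_eq _ t h1) hs h2]

lemma pair_best {α : Type*} [DecidableEq α] [Nonempty α] (L : LinearOrder α) (t s : α)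
    (h : L.le s t) : bestIn L {t, s} = t := by
  rw [bestIn, dif_pos ⟨t, Finset.mem_insert_self _ _⟩]
  refine @le_antisymm _ L.toPartialOrder _ _ ?_ ?_
  · refine @Finset.max'_le _ L _ _ _ (fun y hy => ?_)
    rcases Finset.mem_insert.mp hy with h1 | h1
    · exact h1 ▸ @le_refl _ L.toPreorder t
    · exact (Finset.mem_singleton.mp h1) ▸ h
  · exact @Finset.le_max' _ L _ t (Finset.mem_insert_self _ _)

lemma pair_worst {α : Type*} [DecidableEq α] [Nonempty α] (L : LinearOrder α) (t s : α)
    (h : L.le s t) : worstIn L {t, s} = s := by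
  rw [worstIn, dif_pos ⟨t, Finset.mem_insert_self _ _⟩]
  refine @le_antisymm _ L.toPartialOrder _ _ ?_ ?_
  · exact @Finset.min'_le _ L _ s (by simp)
  · refine @Finset.le_min' _ L _ _ _ (fun y hy => ?_)
    rcases Finset.mem_insert.mp hy with h1 | h1
    · exact h1 ▸ h
    · exact (Finset.mem_singleton.mp h1) ▸ @le_refl _ L.toPreorder s

lemma worst_le {α : Type*} [DecidableEq α] [Nonempty α] (L : LinearOrder α) (t s x : α)
    (hx : x ∈ ({t, s} : Finset α)) : L.le (worstIn L {t, s}) x := by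
  rw [worstIn, dif_pos ⟨t, Finset.mem_insert_self _ _⟩]
  exact @Finset.min'_le _ L _ x hx

lemma myF_card (P : Profile (Fin 1) (Fin 4)) : (myF P).card = 2 := by
  rw [myF, Finset.card_insert_of_notMem (by simp [top_ne_sec (P 0)]),
    Finset.card_singleton]

lemma pair_split {B C : Finset (Fin 4)} (hd : Disjoint B C) {a b x y : Fin 4}
    (hx : x ∈ B) (hy : y ∈ C) (h : ({a, b} : Finset (Fin 4)) = {x, y}) :
    (a ∈ B ∧ b ∈ C) ∨ (b ∈ B ∧ a ∈ C) := by
  have hxy : x ≠ y := fun he => (Finset.disjoint_left.mp hd hx) (he ▸ hy)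
  have ha : a = x ∨ a = y := by
    have : a ∈ ({x, y} : Finset (Fin 4)) := h ▸ (by simp)
    simpa using this
  have hb : b = x ∨ b = y := by
    have : b ∈ ({x, y} : Finset (Fin 4)) := h ▸ (by simp)
    simpa using this
  have hy' : y ∈ ({a, b} : Finset (Fin 4)) := h.symm ▸ (by simp)
  have hx' : x ∈ ({a, b} : Finset (Fin 4)) := h.symm ▸ (by simp)
  rcases ha with h1 | h1 <;> rcases hb with h2 | h2
  · exfalso; apply hxy; subst h1 h2
    rcases Finset.mem_insert.mp hy' with h3 | h3
    · exact h3.symm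
    · exact (Finset.mem_singleton.mp h3).symm
  · exact Or.inl ⟨h1 ▸ hx, h2 ▸ hy⟩
  · exact Or.inr ⟨h2 ▸ hx, h1 ▸ hy⟩
  · exfalso; apply hxy; subst h1 h2
    rcases Finset.mem_insert.mp hx' with h3 | h3
    · exact h3
    · exact Finset.mem_singleton.mp h3

/-- ballot from a rank function -/
def rankBallot (r : Fin 4 → Fin 4) (hr : Function.Injective r) : Ballot (Fin 4) :=
  LinearOrder.lift' r hr

end S10

/-- with four alternatives and one voter, there is an irreducible consular
election rule satisfying SPP, SPO and weak viability that is not onto. -/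
theorem statement_10 :
    ∃ F : Profile (Fin 1) (Fin 4) → Finset (Fin 4),
      (∀ P, (F P).card = 2) ∧
      ¬ Reducible F ∧ SPP F ∧ SPO F ∧ WeaklyViable F ∧
      ∃ W : Finset (Fin 4), W.card = 2 ∧ ∀ P : Profile (Fin 1) (Fin 4), F P ≠ W := by
  classical
  have mkB : ∀ (r : Fin 4 → Fin 4) (hr : Function.Injective r) (t s : Fin 4),
      (∀ x, r x ≤ r t) → s ∈ S10.Sfun t → (∀ x ∈ S10.Sfun t, r x ≤ r s) →
      S10.myF (fun _ => S10.rankBallot r hr) = {t, s} := by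
    intro r hr t s h1 hs h2
    exact S10.myF_eq _ t s (fun x => h1 x) hs (fun x hx => h2 x hx)
  have hP23 : ∃ P : Profile (Fin 1) (Fin 4), S10.myF P = ({2, 3} : Finset (Fin 4)) :=
    ⟨_, mkB ![1,0,3,2] (by decide) 2 3 (by decide) (by decide) (by decide)⟩
  have hP02 : ∃ P : Profile (Fin 1) (Fin 4), S10.myF P = ({0, 2} : Finset (Fin 4)) :=
    ⟨_, mkB ![3,0,2,1] (by decide) 0 2 (by decide) (by decide) (by decide)⟩
  have hP03 : ∃ P : Profile (Fin 1) (Fin 4), S10.myF P = ({0, 3} : Finset (Fin 4)) :=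
    ⟨_, mkB ![3,0,1,2] (by decide) 0 3 (by decide) (by decide) (by decide)⟩
  refine ⟨S10.myF, S10.myF_card, ?_, ?_, ?_, ?_, ?_⟩
  · -- not reducible
    rintro ⟨B, C, hB, hC, hd, huniv, G, H, hGH⟩
    obtain ⟨P1, h1⟩ := hP23
    obtain ⟨P2, h2⟩ := hP02
    obtain ⟨P3, h3⟩ := hP03
    have e1 := S10.pair_split hd (G (fun i => restrictBallot (P1 i) B)).2
      (H (fun i => restrictBallot (P1 i) C)).2 (h1.symm.trans (hGH P1))
    have e2 := S10.pair_split hd (G (fun i => restrictBallot (P2 i) B)).2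
      (H (fun i => restrictBallot (P2 i) C)).2 (h2.symm.trans (hGH P2))
    have e3 := S10.pair_split hd (G (fun i => restrictBallot (P3 i) B)).2
      (H (fun i => restrictBallot (P3 i) C)).2 (h3.symm.trans (hGH P3))
    have hdl := Finset.disjoint_left.mp hd
    have n0 : ¬ ((0 : Fin 4) ∈ B ∧ (0 : Fin 4) ∈ C) := fun h => hdl h.1 h.2
    have n2 : ¬ ((2 : Fin 4) ∈ B ∧ (2 : Fin 4) ∈ C) := fun h => hdl h.1 h.2
    have n3 : ¬ ((3 : Fin 4) ∈ B ∧ (3 : Fin 4) ∈ C) := fun h => hdl h.1 h.2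
    rcases e1 with ⟨h2B, h3C⟩ | ⟨h3B, h2C⟩
    · rcases e2 with ⟨h0B, h2C'⟩ | ⟨h2B', h0C⟩
      · exact n2 ⟨h2B, h2C'⟩
      · rcases e3 with ⟨h0B', h3C'⟩ | ⟨h3B', h0C'⟩
        · exact n0 ⟨h0B', h0C⟩
        · exact n3 ⟨h3B', h3C⟩
    · rcases e2 with ⟨h0B, h2C'⟩ | ⟨h2B', h0C⟩
      · rcases e3 with ⟨h0B', h3C'⟩ | ⟨h3B', h0C'⟩
        · exact n3 ⟨h3B, h3C'⟩
        · exact n0 ⟨h0B, h0C'⟩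
      · exact n2 ⟨h2B', h2C⟩
  · -- SPP
    intro P i Pi'
    have hi : i = 0 := Subsingleton.elim _ _
    subst hi
    have hup : Function.update P 0 Pi' 0 = Pi' := Function.update_self _ _ _
    have hFP' : S10.myF (Function.update P 0 Pi') = {S10.topOf Pi', S10.secOf Pi'} := by
      rw [S10.myF, hup]
    rw [show S10.myF P = {S10.topOf (P 0), S10.secOf (P 0)} from rfl, hFP',
      S10.pair_worst (P 0) _ _ (S10.sec_le_top (P 0))]
    have hs' : S10.secOf Pi' ∈ S10.Sfun (S10.topOf Pi') := S10.sec_mem Pi'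
    have htrans : ∀ a b c : Fin 4, (P 0).le a b → (P 0).le b c → (P 0).le a c :=
      fun a b c => @le_trans _ (P 0).toPreorder a b c
    have step : ∀ x ∈ ({S10.topOf Pi', S10.secOf Pi'} : Finset (Fin 4)),
        (P 0).le x (S10.secOf (P 0)) →
        (P 0).le (worstIn (P 0) {S10.topOf Pi', S10.secOf Pi'}) (S10.secOf (P 0)) :=
      fun x hx h => htrans _ _ _ (S10.worst_le (P 0) _ _ x hx) h
    by_cases ht : S10.topOf Pi' = S10.topOf (P 0)
    · refine step (S10.secOf Pi') (by simp) ?_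
      exact S10.sec_spec (P 0) _ (ht ▸ hs')
    · by_cases hseq : S10.secOf Pi' = S10.topOf (P 0)
      · refine step (S10.topOf Pi') (by simp) ?_
        exact S10.sec_spec (P 0) _ (S10.Ssymm _ _ (hseq ▸ hs'))
      · rcases S10.Skey (S10.topOf (P 0)) (S10.topOf Pi') (S10.secOf Pi') hs' hseq ht with
          h | h
        · exact step (S10.secOf Pi') (by simp) (S10.sec_spec (P 0) _ h)
        · exact step (S10.topOf Pi') (by simp) (S10.sec_spec (P 0) _ h)
  · -- SPO
    intro P i Pi'
    have hi : i = 0 := Subsingleton.elim _ _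
    subst hi
    have hup : Function.update P 0 Pi' 0 = Pi' := Function.update_self _ _ _
    have hFP' : S10.myF (Function.update P 0 Pi') = {S10.topOf Pi', S10.secOf Pi'} := by
      rw [S10.myF, hup]
    rw [show S10.myF P = {S10.topOf (P 0), S10.secOf (P 0)} from rfl, hFP',
      S10.pair_best (P 0) _ _ (S10.sec_le_top (P 0))]
    rw [bestIn, dif_pos ⟨S10.topOf Pi', Finset.mem_insert_self _ _⟩]
    exact S10.top_spec (P 0) _
  · -- weakly viable
    intro a
    refine ⟨fun _ => S10.rankBallot (fun x => Equiv.swap a 3 x)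
      (Equiv.swap a 3).injective, ?_⟩
    have h : ∀ x : Fin 4,
        (S10.rankBallot (fun x => Equiv.swap a 3 x)
          (Equiv.swap a 3).injective).le x a := by
      intro x
      show Equiv.swap a 3 x ≤ Equiv.swap a 3 a
      rw [Equiv.swap_apply_left]
      have h3 : ∀ y : Fin 4, y ≤ 3 := by decide
      exact h3 _
    have ht := S10.top_eq (S10.rankBallot (fun x => Equiv.swap a 3 x)
      (Equiv.swap a 3).injective) a h
    rw [S10.myF]
    rw [show S10.topOf ((fun (_ : Fin 1) => S10.rankBallot (fun x => Equiv.swap a 3 x)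
      (Equiv.swap a 3).injective) 0) = a from ht]
    exact Finset.mem_insert_self _ _
  · -- not onto
    refine ⟨{0, 1}, by decide, fun P => ?_⟩
    exact S10.Snot01 (S10.topOf (P 0)) (S10.secOf (P 0)) (S10.sec_mem (P 0))
end

section
/- Let F be a consular election rule satisfying SPP and SPO. Then F is reducible if and only if the range graph 𝒢(F) is bipartite. -/
open Function

variable {V A : Type*}

section Aux0
variable {A : Type*}

private lemma blt_irrefl (L : Ballot A) (a : A) : ¬ L.lt a a := lt_irrefl a
private lemma blt_asymm (L : Ballot A) {a b : A} (h : L.lt a b) : ¬ L.lt b a := lt_asymm h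
private lemma blt_trans (L : Ballot A) {a b c : A} (h1 : L.lt a b) (h2 : L.lt b c) : L.lt a c :=
  lt_trans h1 h2
private lemma blt_of_le_of_lt (L : Ballot A) {a b c : A} (h1 : L.le a b) (h2 : L.lt b c) :
    L.lt a c := lt_of_le_of_lt h1 h2
private lemma blt_of_lt_of_le (L : Ballot A) {a b c : A} (h1 : L.lt a b) (h2 : L.le b c) :
    L.lt a c := lt_of_lt_of_le h1 h2
private lemma blt_of_not_le (L : Ballot A) {a b : A} (h : ¬ L.le a b) : L.lt b a := not_le.mp h
private lemma ble_of_not_lt (L : Ballot A) {a b : A} (h : ¬ L.lt a b) : L.le b a := not_lt.mp h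
private lemma blt_of_le_of_ne (L : Ballot A) {a b : A} (h : L.le a b) (h2 : a ≠ b) : L.lt a b :=
  lt_of_le_of_ne h h2
private lemma bne_of_lt (L : Ballot A) {a b : A} (h : L.lt a b) : a ≠ b := ne_of_lt h
private lemma blt_trichotomy (L : Ballot A) (a b : A) : L.lt a b ∨ a = b ∨ L.lt b a :=
  lt_trichotomy a b

end Aux0
section Aux1
set_option linter.unusedSectionVars false
variable {A : Type*} [DecidableEq A]

private lemma pair_repr [Nonempty A] (L : Ballot A) {W : Finset A} (hW : W.card = 2) :
    ∃ b c, L.lt c b ∧ W = {b, c} := by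
  obtain ⟨x, y, hxy, rfl⟩ := Finset.card_eq_two.mp hW
  rcases @lt_trichotomy A L x y with h | h | h
  · exact ⟨y, x, h, Finset.pair_comm x y⟩
  · exact absurd h hxy
  · exact ⟨x, y, h, rfl⟩

private lemma bestIn_pair [Nonempty A] (L : Ballot A) {b c : A} (h : L.lt c b) :
    bestIn L ({b, c} : Finset A) = b := by
  have hne : ({b, c} : Finset A).Nonempty := ⟨b, by simp⟩
  rw [bestIn, dif_pos hne]
  have hmem := @Finset.max'_mem A L {b, c} hne
  have hle := @Finset.le_max' A L {b, c} b (by simp)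
  rcases Finset.mem_insert.mp hmem with h1 | h1
  · exact h1
  · rw [Finset.mem_singleton] at h1
    rw [h1] at hle
    exact absurd hle (not_le_of_gt h)

private lemma worstIn_pair [Nonempty A] (L : Ballot A) {b c : A} (h : L.lt c b) :
    worstIn L ({b, c} : Finset A) = c := by
  have hne : ({b, c} : Finset A).Nonempty := ⟨b, by simp⟩
  rw [worstIn, dif_pos hne]
  have hmem := @Finset.min'_mem A L {b, c} hne
  have hle := @Finset.min'_le A L {b, c} c (by simp)
  rcases Finset.mem_insert.mp hmem with h1 | h1
  · rw [h1] at hle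
    exact absurd hle (not_le_of_gt h)
  · exact Finset.mem_singleton.mp h1

private lemma swapBallot_le [DecidableEq A] (L : Ballot A) (s t x y : A) :
    (swapBallot L s t).le x y ↔ L.le (Equiv.swap s t x) (Equiv.swap s t y) := Iff.rfl

private lemma swapBallot_lt [DecidableEq A] (L : Ballot A) (s t x y : A) :
    (swapBallot L s t).lt x y ↔ L.lt (Equiv.swap s t x) (Equiv.swap s t y) := Iff.rfl

end Aux1
section Aux2
set_option linter.unusedSectionVars false
set_option linter.unusedVariables false
variable {A : Type*} [DecidableEq A]

private lemma justAbove_gt_iff (L : Ballot A) {s t : A} (hJA : JustAbove L s t)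
    {y : A} (hys : y ≠ s) (hyt : y ≠ t) : L.lt t y ↔ L.lt s y := by
  obtain ⟨hst, hbet⟩ := hJA
  constructor
  · exact fun h => @lt_trans A _ _ _ _ hst h
  · intro h
    rcases @lt_trichotomy A L t y with h' | h' | h'
    · exact h'
    · exact absurd h'.symm hyt
    · exact absurd ⟨h, h'⟩ (hbet y)

private lemma justAbove_lt_iff (L : Ballot A) {s t : A} (hJA : JustAbove L s t)
    {x : A} (hxs : x ≠ s) (hxt : x ≠ t) : L.lt x s ↔ L.lt x t := by
  obtain ⟨hst, hbet⟩ := hJA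
  constructor
  · exact fun h => @lt_trans A _ _ _ _ h hst
  · intro h
    rcases @lt_trichotomy A L x s with h' | h' | h'
    · exact h'
    · exact absurd h' hxs
    · exact absurd ⟨h', h⟩ (hbet x)

private lemma swap_lt_of_ne (L : Ballot A) {s t : A} (hJA : JustAbove L s t) {x y : A}
    (h1 : ¬(x = s ∧ y = t)) (h2 : ¬(x = t ∧ y = s)) :
    (swapBallot L s t).lt x y ↔ L.lt x y := by
  rw [swapBallot_lt]
  by_cases hxs : x = s
  · by_cases hyt : y = t
    · exact absurd ⟨hxs, hyt⟩ h1
    · by_cases hys : y = s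
      · rw [hxs, hys]; simp
      · rw [hxs, Equiv.swap_apply_left, Equiv.swap_apply_of_ne_of_ne hys hyt]
        exact justAbove_gt_iff L hJA hys hyt
  · by_cases hxt : x = t
    · by_cases hys : y = s
      · exact absurd ⟨hxt, hys⟩ h2
      · by_cases hyt : y = t
        · rw [hxt, hyt]; simp
        · rw [hxt, Equiv.swap_apply_right, Equiv.swap_apply_of_ne_of_ne hys hyt]
          exact (justAbove_gt_iff L hJA hys hyt).symm
    · rw [Equiv.swap_apply_of_ne_of_ne hxs hxt]
      by_cases hys : y = s
      · rw [hys, Equiv.swap_apply_left]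
        exact (justAbove_lt_iff L hJA hxs hxt).symm
      · by_cases hyt : y = t
        · rw [hyt, Equiv.swap_apply_right]
          exact justAbove_lt_iff L hJA hxs hxt
        · rw [Equiv.swap_apply_of_ne_of_ne hys hyt]

private lemma bestIn_swap_pair [Nonempty A] (L : Ballot A) {s t : A} (hJA : JustAbove L s t)
    {x y : A} (hyx : L.lt y x) :
    bestIn (swapBallot L s t) ({x, y} : Finset A) = if x = t ∧ y = s then s else x := by
  split_ifs with h
  · rw [h.1, h.2, Finset.pair_comm]
    refine bestIn_pair _ ?_
    rw [swapBallot_lt, Equiv.swap_apply_left, Equiv.swap_apply_right]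
    exact hJA.1
  · refine bestIn_pair _ ?_
    rw [swap_lt_of_ne L hJA]
    · exact hyx
    · exact fun hh => h ⟨hh.2, hh.1⟩
    · rintro ⟨h1', h2'⟩
      rw [h1', h2'] at hyx
      exact absurd hyx (lt_asymm hJA.1)

private lemma worstIn_swap_pair [Nonempty A] (L : Ballot A) {s t : A} (hJA : JustAbove L s t)
    {x y : A} (hyx : L.lt y x) :
    worstIn (swapBallot L s t) ({x, y} : Finset A) = if x = t ∧ y = s then t else y := by
  split_ifs with h
  · rw [h.1, h.2, Finset.pair_comm]
    refine worstIn_pair _ ?_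
    rw [swapBallot_lt, Equiv.swap_apply_left, Equiv.swap_apply_right]
    exact hJA.1
  · refine worstIn_pair _ ?_
    rw [swap_lt_of_ne L hJA]
    · exact hyx
    · exact fun hh => h ⟨hh.2, hh.1⟩
    · rintro ⟨h1', h2'⟩
      rw [h1', h2'] at hyx
      exact absurd hyx (lt_asymm hJA.1)

end Aux2
section Aux3
set_option linter.unusedSectionVars false
variable {A : Type*} [DecidableEq A]

private lemma key_pair (L : Ballot A) {s t : A} (hJA : JustAbove L s t)
    {x x' : A} (hle1 : L.le x' x) (hle2 : L.le (Equiv.swap s t x) (Equiv.swap s t x')) :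
    x' = x ∨ (x = t ∧ x' = s) := by
  by_cases hxx : x' = x
  · exact Or.inl hxx
  have hlt1 : L.lt x' x := lt_of_le_of_ne hle1 hxx
  by_cases hxs : x = s
  · rw [hxs, Equiv.swap_apply_left] at hle2
    by_cases hx's : x' = s
    · exact absurd (hx's.trans hxs.symm) hxx
    · by_cases hx't : x' = t
      · rw [hx't, Equiv.swap_apply_right] at hle2
        exact absurd (lt_of_le_of_lt hle2 hJA.1) (lt_irrefl t)
      · rw [Equiv.swap_apply_of_ne_of_ne hx's hx't] at hle2
        rw [hxs] at hlt1
        exact absurd (lt_of_le_of_lt hle2 (lt_trans hlt1 hJA.1)) (lt_irrefl t)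
  · by_cases hxt : x = t
    · rw [hxt, Equiv.swap_apply_right] at hle2
      by_cases hx's : x' = s
      · exact Or.inr ⟨hxt, hx's⟩
      · by_cases hx't : x' = t
        · exact absurd (hx't.trans hxt.symm) hxx
        · rw [Equiv.swap_apply_of_ne_of_ne hx's hx't] at hle2
          have h1 : L.lt s x' := lt_of_le_of_ne hle2 (fun hh => hx's hh.symm)
          have h2 : L.lt t x' := (justAbove_gt_iff L hJA hx's hx't).mpr h1
          rw [hxt] at hlt1
          exact absurd (lt_trans h2 hlt1) (lt_irrefl t)
    · rw [Equiv.swap_apply_of_ne_of_ne hxs hxt] at hle2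
      by_cases hx's : x' = s
      · rw [hx's, Equiv.swap_apply_left] at hle2
        have hxlt : L.lt x t := lt_of_le_of_ne hle2 hxt
        rw [hx's] at hlt1
        exact absurd ⟨hlt1, hxlt⟩ (hJA.2 x)
      · by_cases hx't : x' = t
        · rw [hx't, Equiv.swap_apply_right] at hle2
          rw [hx't] at hlt1
          exact absurd (lt_of_le_of_lt hle2 (lt_trans hJA.1 hlt1)) (lt_irrefl x)
        · rw [Equiv.swap_apply_of_ne_of_ne hx's hx't] at hle2
          exact absurd (lt_of_le_of_lt hle2 hlt1) (lt_irrefl x)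

private lemma swap_classification [Nonempty A] (L : Ballot A) {s t : A} (hJA : JustAbove L s t)
    {X X' : Finset A} (hX : X.card = 2) (hX' : X'.card = 2)
    (h1 : L.le (bestIn L X') (bestIn L X))
    (h3 : L.le (worstIn L X') (worstIn L X))
    (h2 : (swapBallot L s t).le (bestIn (swapBallot L s t) X) (bestIn (swapBallot L s t) X'))
    (h4 : (swapBallot L s t).le (worstIn (swapBallot L s t) X) (worstIn (swapBallot L s t) X')) :
    X' = X ∨ X' = X.image (Equiv.swap s t) := by
  obtain ⟨b, c, hcb, rfl⟩ := pair_repr L hX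
  obtain ⟨b', c', hcb', rfl⟩ := pair_repr L hX'
  rw [bestIn_pair L hcb, bestIn_pair L hcb'] at h1
  rw [worstIn_pair L hcb, worstIn_pair L hcb'] at h3
  rw [bestIn_swap_pair L hJA hcb, bestIn_swap_pair L hJA hcb'] at h2
  rw [worstIn_swap_pair L hJA hcb, worstIn_swap_pair L hJA hcb'] at h4
  rw [swapBallot_le] at h2 h4
  by_cases hA : b = t ∧ c = s
  · by_cases hA' : b' = t ∧ c' = s
    · left; rw [hA.1, hA.2, hA'.1, hA'.2]
    · exfalso
      rw [if_pos hA, if_neg hA'] at h2 h4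
      rw [Equiv.swap_apply_left] at h2
      rw [Equiv.swap_apply_right] at h4
      by_cases hc't : c' = t
      · rw [hA.1] at h1
        rw [hc't] at hcb'
        exact absurd (lt_of_lt_of_le hcb' h1) (lt_irrefl t)
      · by_cases hc's : c' = s
        · have hb't : b' ≠ t := fun hh => hA' ⟨hh, hc's⟩
          rw [hc's] at hcb'
          have hlt : L.lt t b' := (justAbove_gt_iff L hJA (ne_of_gt hcb') hb't).mpr hcb'
          rw [hA.1] at h1
          exact absurd (lt_of_lt_of_le hlt h1) (lt_irrefl t)
        · rw [Equiv.swap_apply_of_ne_of_ne hc's hc't] at h4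
          have h5 : L.lt s c' := lt_of_le_of_ne h4 (fun hh => hc's hh.symm)
          have h6 : L.lt t c' := (justAbove_gt_iff L hJA hc's hc't).mpr h5
          rw [hA.2] at h3
          exact absurd (lt_trans (lt_of_le_of_lt h3 hJA.1) h6) (lt_irrefl c')
  · by_cases hA' : b' = t ∧ c' = s
    · exfalso
      rw [if_neg hA, if_pos hA'] at h2 h4
      rw [Equiv.swap_apply_left] at h2
      rw [Equiv.swap_apply_right] at h4
      rw [hA'.1] at h1
      rw [hA'.2] at h3
      by_cases hbt : b = t
      · have hcs : c ≠ s := fun hh => hA ⟨hbt, hh⟩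
        have hcb2 : L.lt c t := hbt ▸ hcb
        have hct : c ≠ t := ne_of_lt hcb2
        rw [Equiv.swap_apply_of_ne_of_ne hcs hct] at h4
        have hlt : L.lt c s := lt_of_le_of_ne h4 hcs
        exact absurd (lt_of_le_of_lt h3 hlt) (lt_irrefl s)
      · have htb : L.lt t b := lt_of_le_of_ne h1 (fun hh => hbt hh.symm)
        by_cases hbs : b = s
        · rw [hbs] at htb
          exact absurd (lt_trans hJA.1 htb) (lt_irrefl s)
        · rw [Equiv.swap_apply_of_ne_of_ne hbs hbt] at h2
          exact absurd (lt_of_le_of_lt h2 htb) (lt_irrefl b)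
    · rw [if_neg hA, if_neg hA'] at h2 h4
      have Cb := key_pair L hJA h1 h2
      have Cc := key_pair L hJA h3 h4
      rcases Cb with rfl | ⟨hbt, hb's⟩
      · rcases Cc with rfl | ⟨hct, hc's⟩
        · exact Or.inl rfl
        · right
          have hcb2 : L.lt t b' := hct ▸ hcb
          have hb't : b' ≠ t := ne_of_gt hcb2
          have hb's : b' ≠ s := ne_of_gt (lt_trans hJA.1 hcb2)
          rw [hct, hc's, Finset.image_insert, Finset.image_singleton,
            Equiv.swap_apply_right, Equiv.swap_apply_of_ne_of_ne hb's hb't]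
      · rcases Cc with rfl | ⟨hct, hc's⟩
        · right
          have hcb2 : L.lt c' s := hb's ▸ hcb'
          have hcs : c' ≠ s := ne_of_lt hcb2
          have hct : c' ≠ t := ne_of_lt (lt_trans hcb2 hJA.1)
          rw [hbt, hb's, Finset.image_insert, Finset.image_singleton,
            Equiv.swap_apply_right, Equiv.swap_apply_of_ne_of_ne hcs hct]
        · exfalso
          rw [hbt, hct] at hcb
          exact absurd hcb (lt_irrefl t)
end Aux3
section Aux4
set_option linter.unusedSectionVars false
variable {A : Type*} [DecidableEq A] [Fintype A]

private noncomputable def InvSet (L L' : Ballot A) : Finset (A × A) :=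
  @Finset.filter _ (fun p => L.lt p.1 p.2 ∧ L'.lt p.2 p.1) (Classical.decPred _) Finset.univ

private lemma mem_InvSet {L L' : Ballot A} {p : A × A} :
    p ∈ InvSet L L' ↔ L.lt p.1 p.2 ∧ L'.lt p.2 p.1 := by
  simp only [InvSet, Finset.mem_filter, Finset.mem_univ, true_and]

private lemma eq_of_invSet_empty {L L' : Ballot A} (h : InvSet L L' = ∅) : L = L' := by
  apply LinearOrder.ext
  intro a b
  constructor
  · intro hab
    by_contra hc
    have h1 : L'.lt b a := blt_of_not_le L' hc
    have h2 : L.lt a b := blt_of_le_of_ne L hab (bne_of_lt L' h1).symm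
    have hm : (a, b) ∈ InvSet L L' := mem_InvSet.mpr ⟨h2, h1⟩
    rw [h] at hm
    exact absurd hm (Finset.notMem_empty _)
  · intro hab
    by_contra hc
    have h1 : L.lt b a := blt_of_not_le L hc
    have h2 : L'.lt a b := blt_of_le_of_ne L' hab (bne_of_lt L h1).symm
    have hm : (b, a) ∈ InvSet L L' := mem_InvSet.mpr ⟨h1, h2⟩
    rw [h] at hm
    exact absurd hm (Finset.notMem_empty _)

private noncomputable def Between (L : Ballot A) (p : A × A) : Finset A :=
  @Finset.filter _ (fun z => L.lt p.1 z ∧ L.lt z p.2) (Classical.decPred _) Finset.univ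

private lemma mem_Between {L : Ballot A} {p : A × A} {z : A} :
    z ∈ Between L p ↔ L.lt p.1 z ∧ L.lt z p.2 := by
  simp only [Between, Finset.mem_filter, Finset.mem_univ, true_and]

private lemma exists_adjacent_inversion {L L' : Ballot A} (h : L ≠ L') :
    ∃ s t, JustAbove L s t ∧ L'.lt t s := by
  have hne : (InvSet L L').Nonempty := by
    rcases Finset.eq_empty_or_nonempty (InvSet L L') with he | hne
    · exact absurd (eq_of_invSet_empty he) h
    · exact hne
  obtain ⟨p, hp, hmin⟩ := Finset.exists_min_image (InvSet L L') (fun q => (Between L q).card) hne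
  obtain ⟨hp1, hp2⟩ := mem_InvSet.mp hp
  refine ⟨p.1, p.2, ⟨hp1, ?_⟩, hp2⟩
  rintro z ⟨hz1, hz2⟩
  by_cases hzs : L'.lt z p.1
  · have hq : (p.1, z) ∈ InvSet L L' := mem_InvSet.mpr ⟨hz1, hzs⟩
    have hsub : Between L (p.1, z) ⊂ Between L p := by
      constructor
      · intro w hw
        obtain ⟨hw1, hw2⟩ := mem_Between.mp hw
        exact mem_Between.mpr ⟨hw1, blt_trans L hw2 hz2⟩
      · intro hsub'
        have hz : z ∈ Between L p := mem_Between.mpr ⟨hz1, hz2⟩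
        have hm := mem_Between.mp (hsub' hz)
        exact absurd hm.2 (blt_irrefl L z)
    exact absurd (Finset.card_lt_card hsub) (not_lt.mpr (hmin _ hq))
  · have htz : L'.lt p.2 z := blt_of_lt_of_le L' hp2 (ble_of_not_lt L' hzs)
    have hq : (z, p.2) ∈ InvSet L L' := mem_InvSet.mpr ⟨hz2, htz⟩
    have hsub : Between L (z, p.2) ⊂ Between L p := by
      constructor
      · intro w hw
        obtain ⟨hw1, hw2⟩ := mem_Between.mp hw
        exact mem_Between.mpr ⟨blt_trans L hz1 hw1, hw2⟩
      · intro hsub'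
        have hz : z ∈ Between L p := mem_Between.mpr ⟨hz1, hz2⟩
        have hm := mem_Between.mp (hsub' hz)
        exact absurd hm.1 (blt_irrefl L z)
    exact absurd (Finset.card_lt_card hsub) (not_lt.mpr (hmin _ hq))

private lemma invSet_swap_card_lt {L L' : Ballot A} {s t : A}
    (hJA : JustAbove L s t) (hlt : L'.lt t s) :
    (InvSet (swapBallot L s t) L').card < (InvSet L L').card := by
  apply Finset.card_lt_card
  constructor
  · intro p hp
    obtain ⟨hp1, hp2⟩ := mem_InvSet.mp hp
    have hne1 : ¬(p.1 = s ∧ p.2 = t) := by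
      rintro ⟨e1, e2⟩
      rw [e1, e2, swapBallot_lt, Equiv.swap_apply_left, Equiv.swap_apply_right] at hp1
      exact absurd hp1 (blt_asymm L hJA.1)
    have hne2 : ¬(p.1 = t ∧ p.2 = s) := by
      rintro ⟨e1, e2⟩
      rw [e1, e2] at hp2
      exact absurd hp2 (blt_asymm L' hlt)
    rw [swap_lt_of_ne L hJA hne1 hne2] at hp1
    exact mem_InvSet.mpr ⟨hp1, hp2⟩
  · intro hsub
    have hmem : (s, t) ∈ InvSet L L' := mem_InvSet.mpr ⟨hJA.1, hlt⟩
    have hm := mem_InvSet.mp (hsub hmem)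
    rw [swapBallot_lt, Equiv.swap_apply_left, Equiv.swap_apply_right] at hm
    exact absurd hm.1 (blt_asymm L hJA.1)
end Aux4
section Aux5
set_option linter.unusedSectionVars false
set_option linter.unusedVariables false
set_option maxHeartbeats 1000000
variable {V A : Type*} [DecidableEq V] [Fintype A] [DecidableEq A] [Nonempty A]

private lemma swap_step (F : Profile V A → Finset A) (hcomm : ∀ P, (F P).card = 2)
    (hSPP : SPP F) (hSPO : SPO F)
    (D : A → Prop) (hcol : ∀ (P : Profile V A) (x y : A), x ≠ y → F P = {x, y} → (D x ↔ ¬ D y))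
    (P : Profile V A) (i : V) {s t : A} (hJA : JustAbove (P i) s t) (hDst : D s ∨ D t)
    (c : A) (hc : ¬ D c) :
    c ∈ F (Function.update P i (swapBallot (P i) s t)) ↔ c ∈ F P := by
  set L := P i with hL
  set L' := swapBallot L s t with hL'
  set P' := Function.update P i L' with hP'
  have hst : s ≠ t := bne_of_lt L hJA.1
  have h1 := hSPO P i L'
  have h3 := hSPP P i L'
  have hP'i : P' i = L' := Function.update_self i L' P
  have hback : Function.update P' i L = P := by
    rw [hP', Function.update_idem, hL, Function.update_eq_self]
  have h2 := hSPO P' i L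
  have h4 := hSPP P' i L
  rw [hback, hP'i] at h2 h4
  rcases swap_classification L hJA (hcomm P) (hcomm P') h1 h3 h2 h4 with heq | himg
  · rw [heq]
  · obtain ⟨x, y, hyx, hFP⟩ := pair_repr L (hcomm P)
    have hne : x ≠ y := (bne_of_lt L hyx).symm
    have himg2 : F P' = {Equiv.swap s t x, Equiv.swap s t y} := by
      rw [himg, hFP, Finset.image_insert, Finset.image_singleton]
    rw [himg2, hFP]
    simp only [Finset.mem_insert, Finset.mem_singleton]
    by_cases hxst : x = s ∨ x = t
    · by_cases hyst : y = s ∨ y = t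
      · rcases hxst with hx | hx <;> rcases hyst with hy | hy
        · exact absurd (hx.trans hy.symm) hne
        · rw [hx, hy, Equiv.swap_apply_left, Equiv.swap_apply_right]; tauto
        · rw [hx, hy, Equiv.swap_apply_right, Equiv.swap_apply_left]; tauto
        · exact absurd (hx.trans hy.symm) hne
      · push_neg at hyst
        have hσy : Equiv.swap s t y = y := Equiv.swap_apply_of_ne_of_ne hyst.1 hyst.2
        have hcolP := hcol P x y hne hFP
        -- let z be the swap image of x
        have hz : ∃ z, Equiv.swap s t x = z ∧ z ≠ y ∧ ((D s ∨ D t) ↔ (D x ∨ D z)) ∧ z ≠ x := by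
          rcases hxst with hx | hx
          · refine ⟨t, by rw [hx, Equiv.swap_apply_left], hyst.2.symm, by rw [hx], ?_⟩
            rw [hx]; exact hst.symm
          · refine ⟨s, by rw [hx, Equiv.swap_apply_right], hyst.1.symm, by rw [hx]; exact or_comm, ?_⟩
            rw [hx]; exact hst
        obtain ⟨z, hσx, hzy, hDiff, hzx⟩ := hz
        rw [hσx, hσy]
        have hcolP' : D z ↔ ¬ D y := by
          apply hcol P' z y hzy
          rw [himg2, hσx, hσy]
        have hxz : D x ∨ D z := hDiff.mp hDst
        have hDx : D x := by
          rcases hxz with h | h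
          · exact h
          · exact hcolP.mpr (hcolP'.mp h)
        have hDz : D z := hcolP'.mpr (hcolP.mp hDx)
        have hcx : c ≠ x := fun hh => hc (hh ▸ hDx)
        have hcz : c ≠ z := fun hh => hc (hh ▸ hDz)
        constructor
        · rintro (hh | hh)
          · exact absurd hh hcz
          · exact Or.inr hh
        · rintro (hh | hh)
          · exact absurd hh hcx
          · exact Or.inr hh
    · push_neg at hxst
      have hσx : Equiv.swap s t x = x := Equiv.swap_apply_of_ne_of_ne hxst.1 hxst.2
      by_cases hyst : y = s ∨ y = t
      · have hcolP := hcol P y x hne.symm (by rw [hFP, Finset.pair_comm])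
        have hz : ∃ z, Equiv.swap s t y = z ∧ z ≠ x ∧ ((D s ∨ D t) ↔ (D y ∨ D z)) ∧ z ≠ y := by
          rcases hyst with hy | hy
          · refine ⟨t, by rw [hy, Equiv.swap_apply_left], hxst.2.symm, by rw [hy], ?_⟩
            rw [hy]; exact hst.symm
          · refine ⟨s, by rw [hy, Equiv.swap_apply_right], hxst.1.symm, by rw [hy]; exact or_comm, ?_⟩
            rw [hy]; exact hst
        obtain ⟨z, hσy, hzx, hDiff, hzy⟩ := hz
        rw [hσx, hσy]
        have hcolP' : D z ↔ ¬ D x := by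
          apply hcol P' z x hzx
          rw [himg2, hσx, hσy]
          exact Finset.pair_comm x z
        have hyz : D y ∨ D z := hDiff.mp hDst
        have hDy : D y := by
          rcases hyz with h | h
          · exact h
          · exact hcolP.mpr (hcolP'.mp h)
        have hDz : D z := hcolP'.mpr (hcolP.mp hDy)
        have hcy : c ≠ y := fun hh => hc (hh ▸ hDy)
        have hcz : c ≠ z := fun hh => hc (hh ▸ hDz)
        constructor
        · rintro (hh | hh)
          · exact Or.inl hh
          · exact absurd hh hcz
        · rintro (hh | hh)
          · exact Or.inl hh
          · exact absurd hh hcy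
      · push_neg at hyst
        rw [hσx, Equiv.swap_apply_of_ne_of_ne hyst.1 hyst.2]

private lemma one_voter [Fintype V] (F : Profile V A → Finset A) (hcomm : ∀ P, (F P).card = 2)
    (hSPP : SPP F) (hSPO : SPO F)
    (D : A → Prop) (hcol : ∀ (P : Profile V A) (x y : A), x ≠ y → F P = {x, y} → (D x ↔ ¬ D y)) :
    ∀ (n : ℕ) (P : Profile V A) (i : V) (L' : Ballot A),
      (InvSet (P i) L').card ≤ n →
      (∀ x y, ¬ D x → ¬ D y → ((P i).lt x y ↔ L'.lt x y)) →
      ∀ c, ¬ D c → (c ∈ F (Function.update P i L') ↔ c ∈ F P) := by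
  intro n
  induction n with
  | zero =>
    intro P i L' hcard hagree c hc
    have hempty : InvSet (P i) L' = ∅ := Finset.card_eq_zero.mp (Nat.le_zero.mp hcard)
    have heq : P i = L' := eq_of_invSet_empty hempty
    rw [← heq, Function.update_eq_self]
  | succ n ih =>
    intro P i L' hcard hagree c hc
    by_cases heq : P i = L'
    · rw [← heq, Function.update_eq_self]
    · obtain ⟨s, t, hJA, hinv⟩ := exists_adjacent_inversion heq
      have hDst : D s ∨ D t := by
        by_contra hcon
        push_neg at hcon
        have := (hagree s t hcon.1 hcon.2).mp hJA.1
        exact absurd this (blt_asymm L' hinv)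
      set L1 := swapBallot (P i) s t with hL1
      set P1 := Function.update P i L1 with hP1
      have hP1i : P1 i = L1 := Function.update_self i L1 P
      have step1 := swap_step F hcomm hSPP hSPO D hcol P i hJA hDst c hc
      have hcard1 : (InvSet (P1 i) L').card ≤ n := by
        rw [hP1i]
        have hlt := invSet_swap_card_lt hJA hinv
        rw [← hL1] at hlt
        omega
      have hagree1 : ∀ x y, ¬ D x → ¬ D y → ((P1 i).lt x y ↔ L'.lt x y) := by
        intro x y hx hy
        rw [hP1i, hL1]
        have hne1 : ¬(x = s ∧ y = t) := by
          rintro ⟨e1, e2⟩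
          rcases hDst with hD | hD
          · exact hx (e1 ▸ hD)
          · exact hy (e2 ▸ hD)
        have hne2 : ¬(x = t ∧ y = s) := by
          rintro ⟨e1, e2⟩
          rcases hDst with hD | hD
          · exact hy (e2 ▸ hD)
          · exact hx (e1 ▸ hD)
        rw [swap_lt_of_ne (P i) hJA hne1 hne2]
        exact hagree x y hx hy
      have step2 := ih P1 i L' hcard1 hagree1 c hc
      rw [Function.update_idem] at step2
      rw [← hL1, ← hP1] at step1
      exact step2.trans step1

private lemma many_voters [Fintype V] (F : Profile V A → Finset A) (hcomm : ∀ P, (F P).card = 2)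
    (hSPP : SPP F) (hSPO : SPO F)
    (D : A → Prop) (hcol : ∀ (P : Profile V A) (x y : A), x ≠ y → F P = {x, y} → (D x ↔ ¬ D y))
    (P P' : Profile V A)
    (hagree : ∀ i x y, ¬ D x → ¬ D y → ((P i).lt x y ↔ (P' i).lt x y))
    (c : A) (hc : ¬ D c) : c ∈ F P ↔ c ∈ F P' := by
  classical
  have key : ∀ s : Finset V, ∀ Q : Profile V A,
      (∀ i, i ∉ s → Q i = P' i) →
      (∀ i x y, ¬ D x → ¬ D y → ((Q i).lt x y ↔ (P' i).lt x y)) →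
      (c ∈ F Q ↔ c ∈ F P') := by
    intro s
    induction s using Finset.induction_on with
    | empty =>
      intro Q hout _
      have : Q = P' := funext fun i => hout i (Finset.notMem_empty i)
      rw [this]
    | insert j s' hj ih =>
      intro Q hout hagr
      set Q1 := Function.update Q j (P' j) with hQ1
      have h1 : c ∈ F Q1 ↔ c ∈ F Q := by
        apply one_voter F hcomm hSPP hSPO D hcol ((InvSet (Q j) (P' j)).card) Q j (P' j) le_rfl
        · exact hagr j
        · exact hc
      have h2 : c ∈ F Q1 ↔ c ∈ F P' := by
        apply ih Q1
        · intro i hi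
          by_cases hij : i = j
          · rw [hij, hQ1, Function.update_self]
          · rw [hQ1]
            rw [Function.update_of_ne hij]
            exact hout i (by simp [Finset.mem_insert, hij, hi])
        · intro i x y hx hy
          by_cases hij : i = j
          · rw [hij, hQ1, Function.update_self]
          · rw [hQ1, Function.update_of_ne hij]
            exact hagr i x y hx hy
      rw [← h1, h2]
  apply key Finset.univ P (fun i hi => absurd (Finset.mem_univ i) hi) hagree
end Aux5
section Aux6
set_option linter.unusedSectionVars false
set_option maxHeartbeats 1000000
variable {A : Type*} [Fintype A] [DecidableEq A]

private noncomputable def extBallot (L0 : Ballot A) (Bf : Finset A) (M : Ballot {x // x ∈ Bf}) :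
    Ballot A :=
  letI : LinearOrder {x // x ∈ Bf} := M
  letI : LinearOrder {x // x ∈ Bfᶜ} := restrictBallot L0 Bfᶜ
  LinearOrder.lift'
    (fun a : A =>
      if h : a ∈ Bf then toLex (Sum.inr (⟨a, h⟩ : {x // x ∈ Bf}))
      else toLex (Sum.inl (⟨a, by simpa using h⟩ : {x // x ∈ Bfᶜ})))
    (by
      intro a b hab
      by_cases ha : a ∈ Bf <;> by_cases hb : b ∈ Bf <;>
        simp only [dif_pos, dif_neg, ha, hb] at hab <;> simp_all)

private lemma lift'_lt {β : Type*} [LinearOrder β] (f : A → β) (inj : Function.Injective f)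
    (a b : A) : (LinearOrder.lift' f inj).lt a b ↔ f a < f b := Iff.rfl

private lemma extBallot_lt (L0 : Ballot A) (Bf : Finset A) (M : Ballot {x // x ∈ Bf})
    {x y : A} (hx : x ∈ Bf) (hy : y ∈ Bf) :
    (extBallot L0 Bf M).lt x y ↔ M.lt ⟨x, hx⟩ ⟨y, hy⟩ := by
  unfold extBallot
  rw [lift'_lt, dif_pos hx, dif_pos hy]
  exact @Sum.Lex.inr_lt_inr_iff {x // x ∈ Bfᶜ} {x // x ∈ Bf}
    (@Preorder.toLT _ (@PartialOrder.toPreorder _ (@LinearOrder.toPartialOrder _ (restrictBallot L0 Bfᶜ))))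
    (@Preorder.toLT _ (@PartialOrder.toPreorder _ (@LinearOrder.toPartialOrder _ M))) _ _
  intro a b hab
  by_cases ha : a ∈ Bf <;> by_cases hb : b ∈ Bf <;>
    simp only [dif_pos, dif_neg, ha, hb] at hab <;> simp_all

private lemma restrictBallot_lt (L : Ballot A) (Bf : Finset A) (a b : {x // x ∈ Bf}) :
    (restrictBallot L Bf).lt a b ↔ L.lt a.val b.val := Iff.rfl

end Aux6
set_option maxHeartbeats 1000000 in
/-- a consular election rule satisfying SPP and SPO is reducible iff its
range graph is bipartite. -/
theorem statement_11 {V A : Type*} [Fintype V] [Nonempty V] [DecidableEq V] [Fintype A] [DecidableEq A] [Nonempty A]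
    (F : Profile V A → Finset A) (hcomm : ∀ P, (F P).card = 2)
    (hSPP : SPP F) (hSPO : SPO F) :
    Reducible F ↔
      ∃ B : Set A, ∀ a b : A, (rangeGraph F).Adj a b → (a ∈ B ↔ b ∉ B) := by
  classical
  constructor
  · rintro ⟨Bf, Cf, hBne, hCne, hdisj, huniv, G, H, hGH⟩
    refine ⟨{a | a ∈ Bf}, ?_⟩
    rintro a b ⟨hab, P, hFP⟩
    rw [hGH P] at hFP
    set g : A := ↑(G fun i => restrictBallot (P i) Bf) with hgdef
    set h : A := ↑(H fun i => restrictBallot (P i) Cf) with hhdef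
    have hg : g ∈ Bf := (G fun i => restrictBallot (P i) Bf).2
    have hh : h ∈ Cf := (H fun i => restrictBallot (P i) Cf).2
    have hhB : h ∉ Bf := Finset.disjoint_right.mp hdisj hh
    have ha : a ∈ ({g, h} : Finset A) := by rw [hFP]; simp
    have hb : b ∈ ({g, h} : Finset A) := by rw [hFP]; simp
    simp only [Finset.mem_insert, Finset.mem_singleton] at ha hb
    simp only [Set.mem_setOf_eq]
    rcases ha with ha | ha <;> rcases hb with hb | hb
    · exact absurd (ha.trans hb.symm) hab
    · rw [ha, hb]
      exact iff_of_true hg (by simpa using hhB)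
    · rw [ha, hb]
      exact iff_of_false hhB (by simpa using hg)
    · exact absurd (ha.trans hb.symm) hab
  · rintro ⟨B, hB⟩
    -- the two coloring lemmas
    have hcol1 : ∀ (P : Profile V A) (x y : A), x ≠ y → F P = {x, y} →
        ((x ∈ B) ↔ ¬ (y ∈ B)) := fun P x y hxy hF => hB x y ⟨hxy, P, hF⟩
    have hcol2 : ∀ (P : Profile V A) (x y : A), x ≠ y → F P = {x, y} →
        ((x ∉ B) ↔ ¬ (y ∉ B)) := by
      intro P x y hxy hF
      have h := hcol1 P x y hxy hF
      tauto
    -- choose the B-winner and the non-B-winner of each profile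
    have key : ∀ P : Profile V A, ∃ p : A × A, p.1 ∈ B ∧ p.2 ∉ B ∧ F P = {p.1, p.2} := by
      intro P
      obtain ⟨x, y, hxy, hF⟩ := Finset.card_eq_two.mp (hcomm P)
      have hcolxy := hcol1 P x y hxy hF
      by_cases hx : x ∈ B
      · exact ⟨(x, y), hx, hcolxy.mp hx, hF⟩
      · refine ⟨(y, x), ?_, hx, by rw [hF, Finset.pair_comm]⟩
        by_contra hy
        exact hx (by tauto)
    choose w hw1 hw2 hw3 using key
    have hmemB : ∀ P : Profile V A, (w P).1 ∈ F P := by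
      intro P; rw [hw3 P]; exact Finset.mem_insert_self _ _
    have hmemC : ∀ P : Profile V A, (w P).2 ∈ F P := by
      intro P; rw [hw3 P]; simp
    have huniqB : ∀ (P : Profile V A) (a : A), a ∈ F P → a ∈ B → a = (w P).1 := by
      intro P a haF haB
      rw [hw3 P] at haF
      rcases Finset.mem_insert.mp haF with h | h
      · exact h
      · rw [Finset.mem_singleton] at h
        exact absurd (h ▸ haB) (hw2 P)
    have huniqC : ∀ (P : Profile V A) (a : A), a ∈ F P → a ∉ B → a = (w P).2 := by
      intro P a haF haB
      rw [hw3 P] at haF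
      rcases Finset.mem_insert.mp haF with h | h
      · exact absurd (h ▸ haB) (not_not.mpr (hw1 P))
      · exact Finset.mem_singleton.mp h
    -- independence
    have indB : ∀ P P' : Profile V A,
        (∀ i x y, x ∈ B → y ∈ B → ((P i).lt x y ↔ (P' i).lt x y)) → (w P).1 = (w P').1 := by
      intro P P' hag
      have hmv := many_voters F hcomm hSPP hSPO (fun a => a ∉ B) hcol2 P P'
        (fun i x y hx hy => hag i x y (not_not.mp hx) (not_not.mp hy)) (w P).1
        (not_not.mpr (hw1 P))
      exact huniqB P' _ (hmv.mp (hmemB P)) (hw1 P)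
    have indC : ∀ P P' : Profile V A,
        (∀ i x y, x ∉ B → y ∉ B → ((P i).lt x y ↔ (P' i).lt x y)) → (w P).2 = (w P').2 := by
      intro P P' hag
      have hmv := many_voters F hcomm hSPP hSPO (fun a => a ∈ B) hcol1 P P'
        (fun i x y hx hy => hag i x y hx hy) (w P).2 (hw2 P)
      exact huniqC P' _ (hmv.mp (hmemC P)) (hw2 P)
    -- the partition
    set Bf : Finset A := Finset.univ.filter (fun a => a ∈ B) with hBf
    set Cf : Finset A := Finset.univ.filter (fun a => a ∉ B) with hCf
    have hmemBf : ∀ a : A, a ∈ Bf ↔ a ∈ B := by intro a; simp [hBf]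
    have hmemCf : ∀ a : A, a ∈ Cf ↔ a ∉ B := by intro a; simp [hCf]
    set L0 : Ballot A := LinearOrder.lift' (Fintype.equivFin A) (Fintype.equivFin A).injective
      with hL0
    set P0 : Profile V A := fun _ => L0 with hP0
    refine ⟨Bf, Cf, ⟨(w P0).1, (hmemBf _).mpr (hw1 P0)⟩, ⟨(w P0).2, (hmemCf _).mpr (hw2 P0)⟩,
      ?_, ?_, ?_⟩
    · rw [Finset.disjoint_left]
      intro a ha hb
      exact (hmemCf a).mp hb ((hmemBf a).mp ha)
    · ext a
      simp only [Finset.mem_union, Finset.mem_univ, iff_true]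
      by_cases h : a ∈ B
      · exact Or.inl ((hmemBf a).mpr h)
      · exact Or.inr ((hmemCf a).mpr h)
    · refine ⟨fun Q => ⟨(w fun i => extBallot L0 Bf (Q i)).1,
        (hmemBf _).mpr (hw1 _)⟩,
        fun Q => ⟨(w fun i => extBallot L0 Cf (Q i)).2,
        (hmemCf _).mpr (hw2 _)⟩, ?_⟩
      intro P
      have hGeq : (w fun i => extBallot L0 Bf (restrictBallot (P i) Bf)).1 = (w P).1 := by
        apply indB
        intro i x y hx hy
        have hxf : x ∈ Bf := (hmemBf x).mpr hx
        have hyf : y ∈ Bf := (hmemBf y).mpr hy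
        rw [extBallot_lt L0 Bf _ hxf hyf]
        exact (restrictBallot_lt (P i) Bf ⟨x, hxf⟩ ⟨y, hyf⟩)
      have hHeq : (w fun i => extBallot L0 Cf (restrictBallot (P i) Cf)).2 = (w P).2 := by
        apply indC
        intro i x y hx hy
        have hxf : x ∈ Cf := (hmemCf x).mpr hx
        have hyf : y ∈ Cf := (hmemCf y).mpr hy
        rw [extBallot_lt L0 Cf _ hxf hyf]
        exact (restrictBallot_lt (P i) Cf ⟨x, hxf⟩ ⟨y, hyf⟩)
      rw [hw3 P]
      simp only [hGeq, hHeq]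
end

section
/- Let F be a weakly viable, reducible consular election rule satisfying SPP and SPO. Then the range graph 𝒢(F) is a complete bipartite graph: there is a partition A = B ⊎ C into nonempty sets such that {x, y} is an edge of 𝒢(F) if and only if one of x, y lies in B and the other in C. -/
open Function

variable {V A : Type*}

section myhelpers

variable {A' : Type*}

/-- the set of elements strictly below `a` in linear order `L` -/
noncomputable def blw (L : LinearOrder A') [Fintype A'] (a : A') : Finset A' :=
  @Finset.filter A' (fun y => L.lt y a) (Classical.decPred _) Finset.univ

lemma mem_blw (L : LinearOrder A') [Fintype A'] {a x : A'} :
    x ∈ blw L a ↔ L.lt x a := by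
  letI := L
  unfold blw
  rw [@Finset.mem_filter A' (fun y => y < a) (Classical.decPred _)]
  simp

/-- number of elements strictly below `a` in linear order `L` -/
noncomputable def rnk (L : LinearOrder A') [Fintype A'] (a : A') : ℕ :=
  (blw L a).card

lemma rnk_strictMono (L : LinearOrder A') [Fintype A'] {a b : A'} (h : L.lt a b) :
    rnk L a < rnk L b := by
  letI := L
  apply Finset.card_lt_card
  rw [Finset.ssubset_iff_of_subset]
  · exact ⟨a, (mem_blw L).2 h, fun hc => absurd ((mem_blw L).1 hc) (lt_irrefl a)⟩
  · intro y hy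
    exact (mem_blw L).2 (lt_trans ((mem_blw L).1 hy) h)

lemma rnk_le_iff (L : LinearOrder A') [Fintype A'] {a b : A'} :
    L.le a b ↔ rnk L a ≤ rnk L b := by
  letI := L
  constructor
  · intro h
    rcases eq_or_lt_of_le h with rfl | h
    · exact le_refl _
    · exact le_of_lt (rnk_strictMono L h)
  · intro h
    by_contra hc
    have := rnk_strictMono L (lt_of_not_ge hc)
    omega

lemma rnk_lt_card (L : LinearOrder A') [Fintype A'] (a : A') :
    rnk L a < Fintype.card A' := by
  letI := L
  rw [← Finset.card_univ]
  apply Finset.card_lt_card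
  rw [Finset.ssubset_univ_iff]
  intro hc
  have : a ∈ blw L a := hc ▸ Finset.mem_univ a
  exact absurd ((mem_blw L).1 this) (lt_irrefl a)

end myhelpers

section mix

variable {A : Type*} [Fintype A] [DecidableEq A]

/-- combine two ballots defined on complementary sets into one full ballot -/
noncomputable def mixBallot (B C : Finset A) (hu : ∀ a : A, a ∉ B → a ∈ C)
    (LB : Ballot {x // x ∈ B}) (LC : Ballot {x // x ∈ C}) : Ballot A :=
  LinearOrder.lift'
    (fun a => if h : a ∈ B then rnk LB ⟨a, h⟩ else B.card + rnk LC ⟨a, hu a h⟩)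
    (by
      intro a b hab
      by_cases ha : a ∈ B <;> by_cases hb : b ∈ B <;> simp only [ha, hb, dif_pos, dif_neg,
        not_false_iff] at hab
      · have h1 : rnk LB (⟨a, ha⟩ : {x // x ∈ B}) = rnk LB ⟨b, hb⟩ := hab
        have h2 : LB.le ⟨a, ha⟩ ⟨b, hb⟩ := (rnk_le_iff LB).2 h1.le
        have h3 : LB.le ⟨b, hb⟩ ⟨a, ha⟩ := (rnk_le_iff LB).2 h1.ge
        exact congrArg Subtype.val (LB.le_antisymm _ _ h2 h3)
      · exfalso
        have := rnk_lt_card LB ⟨a, ha⟩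
        rw [Fintype.card_coe] at this
        omega
      · exfalso
        have := rnk_lt_card LB ⟨b, hb⟩
        rw [Fintype.card_coe] at this
        omega
      · have h1 : rnk LC (⟨a, hu a ha⟩ : {x // x ∈ C}) = rnk LC ⟨b, hu b hb⟩ := by omega
        have h2 : LC.le ⟨a, hu a ha⟩ ⟨b, hu b hb⟩ := (rnk_le_iff LC).2 h1.le
        have h3 : LC.le ⟨b, hu b hb⟩ ⟨a, hu a ha⟩ := (rnk_le_iff LC).2 h1.ge
        exact congrArg Subtype.val (LC.le_antisymm _ _ h2 h3))

lemma restrict_mix_left (B C : Finset A) (hu : ∀ a : A, a ∉ B → a ∈ C)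
    (LB : Ballot {x // x ∈ B}) (LC : Ballot {x // x ∈ C}) :
    restrictBallot (mixBallot B C hu LB LC) B = LB := by
  apply LinearOrder.ext
  intro x y
  show (mixBallot B C hu LB LC).le x.val y.val ↔ _
  show (if h : (x:A) ∈ B then rnk LB ⟨x, h⟩ else _) ≤
    (if h : (y:A) ∈ B then rnk LB ⟨y, h⟩ else _) ↔ _
  rw [dif_pos x.2, dif_pos y.2]
  simp only [Subtype.coe_eta]
  exact (rnk_le_iff LB (a := x) (b := y)).symm

lemma restrict_mix_right (B C : Finset A) (hd : Disjoint B C) (hu : ∀ a : A, a ∉ B → a ∈ C)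
    (LB : Ballot {x // x ∈ B}) (LC : Ballot {x // x ∈ C}) :
    restrictBallot (mixBallot B C hu LB LC) C = LC := by
  apply LinearOrder.ext
  intro x y
  have hx : (x : A) ∉ B := fun h => (Finset.disjoint_left.1 hd h) x.2
  have hy : (y : A) ∉ B := fun h => (Finset.disjoint_left.1 hd h) y.2
  show (mixBallot B C hu LB LC).le x.val y.val ↔ _
  show (if h : (x:A) ∈ B then rnk LB ⟨x, h⟩ else B.card + rnk LC ⟨x, hu x h⟩) ≤
    (if h : (y:A) ∈ B then rnk LB ⟨y, h⟩ else B.card + rnk LC ⟨y, hu y h⟩) ↔ _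
  rw [dif_neg hx, dif_neg hy]
  simp only [Subtype.coe_eta]
  rw [rnk_le_iff LC (a := x) (b := y)]
  omega

end mix

/-- the range graph of a weakly viable reducible consular election rule
satisfying SPP and SPO is complete bipartite. -/
theorem statement_12 {V A : Type*} [Fintype V] [Nonempty V] [DecidableEq V] [Fintype A] [DecidableEq A] [Nonempty A]
    (F : Profile V A → Finset A) (hcomm : ∀ P, (F P).card = 2)
    (hviable : WeaklyViable F) (hred : Reducible F)
    (hSPP : SPP F) (hSPO : SPO F) :
    ∃ B C : Finset A, B.Nonempty ∧ C.Nonempty ∧ Disjoint B C ∧ B ∪ C = Finset.univ ∧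
      ∀ x y : A, (rangeGraph F).Adj x y ↔ ((x ∈ B ∧ y ∈ C) ∨ (x ∈ C ∧ y ∈ B)) := by
  classical
  obtain ⟨B, C, hB, hC, hdisj, huniv, G, H, hF⟩ := hred
  have hu : ∀ a : A, a ∉ B → a ∈ C := by
    intro a ha
    have : a ∈ B ∪ C := huniv ▸ Finset.mem_univ a
    rcases Finset.mem_union.1 this with h | h
    · exact absurd h ha
    · exact h
  refine ⟨B, C, hB, hC, hdisj, huniv, fun x y => ⟨?_, ?_⟩⟩
  · rintro ⟨hxy, P, hP⟩
    rw [hF P] at hP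
    set g : A := (G fun i => restrictBallot (P i) B : A) with hg
    set h : A := (H fun i => restrictBallot (P i) C : A) with hh
    have hgB : g ∈ B := (G fun i => restrictBallot (P i) B).2
    have hhC : h ∈ C := (H fun i => restrictBallot (P i) C).2
    have hx : x ∈ ({g, h} : Finset A) := by rw [hP]; simp
    have hy : y ∈ ({g, h} : Finset A) := by rw [hP]; simp
    simp only [Finset.mem_insert, Finset.mem_singleton] at hx hy
    rcases hx with rfl | rfl <;> rcases hy with rfl | rfl
    · exact absurd rfl hxy
    · exact Or.inl ⟨hgB, hhC⟩
    · exact Or.inr ⟨hhC, hgB⟩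
    · exact absurd rfl hxy
  · intro hxy
    -- wlog x ∈ B, y ∈ C by symmetry of adjacency
    have key : ∀ x y : A, x ∈ B → y ∈ C → (rangeGraph F).Adj x y := by
      intro x y hxB hyC
      have hne : x ≠ y := by
        rintro rfl
        exact (Finset.disjoint_left.1 hdisj hxB) hyC
      obtain ⟨P1, hP1⟩ := hviable x
      obtain ⟨P2, hP2⟩ := hviable y
      rw [hF P1] at hP1
      rw [hF P2] at hP2
      simp only [Finset.mem_insert, Finset.mem_singleton] at hP1 hP2
      have hxg : x = (G fun i => restrictBallot (P1 i) B : A) := by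
        rcases hP1 with h | h
        · exact h
        · exfalso
          have : x ∈ C := h ▸ (H fun i => restrictBallot (P1 i) C).2
          exact (Finset.disjoint_left.1 hdisj hxB) this
      have hyh : y = (H fun i => restrictBallot (P2 i) C : A) := by
        rcases hP2 with h | h
        · exfalso
          have : y ∈ B := h ▸ (G fun i => restrictBallot (P2 i) B).2
          exact (Finset.disjoint_left.1 hdisj this) hyC
        · exact h
      set P : Profile V A := fun i =>
        mixBallot B C hu (restrictBallot (P1 i) B) (restrictBallot (P2 i) C) with hPdef
      refine ⟨hne, P, ?_⟩
      rw [hF P]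
      have e1 : (fun i => restrictBallot (P i) B) = fun i => restrictBallot (P1 i) B := by
        funext i
        exact restrict_mix_left B C hu _ _
      have e2 : (fun i => restrictBallot (P i) C) = fun i => restrictBallot (P2 i) C := by
        funext i
        exact restrict_mix_right B C hdisj hu _ _
      rw [e1, e2, ← hxg, ← hyh]
    rcases hxy with ⟨hx, hy⟩ | ⟨hx, hy⟩
    · exact key x y hx hy
    · exact (key y x hy hx).symm
end

section
/- Let F be a consular election rule satisfying SPP and SPO, and let P be a profile. Suppose {a, b} is in the range of F, and for every voter i, {a, b} is maximal among the 2-element sets in the range of F under both ⪰_i^O and ⪰_i^P induced by P_i (i.e., {a, b} is every voter's favourite committee at P). Then F(P) = {a, b}. -/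
open Function

variable {V A : Type*}

/-- A two-element finset equals the pair of its min and max. -/
lemma pair_eq_min_max {A : Type*} [LinearOrder A] [DecidableEq A] (S : Finset A) (h2 : S.card = 2)
    (hne : S.Nonempty) : S = {S.min' hne, S.max' hne} := by
  have hlt : S.min' hne < S.max' hne := Finset.min'_lt_max'_of_card S (by omega)
  have hsub : ({S.min' hne, S.max' hne} : Finset A) ⊆ S := by
    intro x hx
    simp only [Finset.mem_insert, Finset.mem_singleton] at hx
    rcases hx with rfl | rfl
    · exact S.min'_mem hne
    · exact S.max'_mem hne
  have hcard : ({S.min' hne, S.max' hne} : Finset A).card = 2 :=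
    Finset.card_pair (ne_of_lt hlt)
  exact (Finset.eq_of_subset_of_card_le hsub (by omega)).symm

/-- if `{a, b}` is in the range of `F` and is every voter's favourite
committee at `P` (maximal in the range under both the optimistic and pessimistic
orders), then `F P = {a, b}`. -/
theorem statement_18 {V A : Type*} [Fintype V] [Nonempty V] [DecidableEq V] [Fintype A] [DecidableEq A] [Nonempty A]
    (F : Profile V A → Finset A) (hcomm : ∀ P, (F P).card = 2)
    (hSPP : SPP F) (hSPO : SPO F)
    (P : Profile V A) (a b : A)
    (hrange : ∃ Q : Profile V A, F Q = {a, b})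
    (hfavO : ∀ (i : V) (W : Finset A), (∃ Q : Profile V A, F Q = W) →
      ¬ (P i).lt (bestIn (P i) ({a, b} : Finset A)) (bestIn (P i) W))
    (hfavP : ∀ (i : V) (W : Finset A), (∃ Q : Profile V A, F Q = W) →
      ¬ (P i).lt (worstIn (P i) ({a, b} : Finset A)) (worstIn (P i) W)) :
    F P = {a, b} := by
  obtain ⟨Q, hQ⟩ := hrange
  have hab2 : ({a, b} : Finset A).card = 2 := by rw [← hQ]; exact hcomm Q
  have habne : ({a, b} : Finset A).Nonempty := ⟨a, by simp⟩
  have key : ∀ R : Profile V A, F R = {a, b} → ∀ i : V,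
      F (Function.update R i (P i)) = {a, b} := by
    intro R hR i
    letI : LinearOrder A := P i
    set R' := Function.update R i (P i) with hR'def
    have hS2 : (F R').card = 2 := hcomm R'
    have hSne : (F R').Nonempty := Finset.card_pos.mp (by omega)
    have hback : Function.update R' i (R i) = R := by
      funext j
      by_cases hj : j = i
      · subst hj; simp [hR'def]
      · simp [hR'def, Function.update, hj]
    have hRi' : R' i = P i := Function.update_self i (P i) R
    have hO := hSPO R' i (R i)
    rw [hback, hR, hRi'] at hO
    have hP := hSPP R' i (R i)
    rw [hback, hR, hRi'] at hP
    have hO' := hfavO i (F R') ⟨R', rfl⟩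
    have hP' := hfavP i (F R') ⟨R', rfl⟩
    have ebS : bestIn (P i) (F R') = (F R').max' hSne := dif_pos hSne
    have ebab : bestIn (P i) ({a, b} : Finset A) = ({a, b} : Finset A).max' habne :=
      dif_pos habne
    have ewS : worstIn (P i) (F R') = (F R').min' hSne := dif_pos hSne
    have ewab : worstIn (P i) ({a, b} : Finset A) = ({a, b} : Finset A).min' habne :=
      dif_pos habne
    have hmax : (F R').max' hSne = ({a, b} : Finset A).max' habne := by
      have h1 : ({a, b} : Finset A).max' habne ≤ (F R').max' hSne := by
        rw [← ebS, ← ebab]; exact hO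
      have h2 : ¬ ({a, b} : Finset A).max' habne < (F R').max' hSne := by
        rw [← ebS, ← ebab]; exact hO'
      exact le_antisymm (le_of_not_gt h2) h1
    have hmin : (F R').min' hSne = ({a, b} : Finset A).min' habne := by
      have h1 : ({a, b} : Finset A).min' habne ≤ (F R').min' hSne := by
        rw [← ewS, ← ewab]; exact hP
      have h2 : ¬ ({a, b} : Finset A).min' habne < (F R').min' hSne := by
        rw [← ewS, ← ewab]; exact hP'
      exact le_antisymm (le_of_not_gt h2) h1
    calc F R' = {(F R').min' hSne, (F R').max' hSne} := pair_eq_min_max _ hS2 hSne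
      _ = {({a, b} : Finset A).min' habne, ({a, b} : Finset A).max' habne} := by
          rw [hmin, hmax]
      _ = {a, b} := (pair_eq_min_max _ hab2 habne).symm
  have main : ∀ s : Finset V, ∀ R : Profile V A, F R = {a, b} →
      (∀ i : V, i ∉ s → R i = P i) → F P = {a, b} := by
    intro s
    induction s using Finset.induction_on with
    | empty =>
        intro R hR hagree
        have : R = P := funext fun i => hagree i (Finset.notMem_empty i)
        rwa [← this]
    | @insert j t hj ih =>
        intro R hR hagree
        refine ih (Function.update R j (P j)) (key R hR j) ?_
        intro i hi
        by_cases hij : i = j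
        · subst hij; simp
        · rw [Function.update_of_ne hij]
          exact hagree i (by simp [hij, hi])
  exact main Finset.univ Q hQ (fun i h => absurd (Finset.mem_univ i) h)
end
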